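/- arXiv:1211.0816 — 9 statements merged into one kernel-verified Lean document; each statement's English description precedes it below -/
import Mathlib

section
/- For all n ≥ 0, the determinant of the (n+1)×(n+1) Hankel matrix with entries C_{i+j+1} (shifted Catalan numbers) equals 1. -/
open Finset

namespace HankelCatalanAux

/-- `A i k = C(2i+1, i+1+k)`. -/
def A (i k : ℕ) : ℕ := (2 * i + 1).choose (i + 1 + k)

/-- `b i k` = number of nonnegative lattice paths of length `2i+1` from `0` to `2k+1`. -/
def b (i k : ℕ) : ℤ := (A i k : ℤ) - (A i (k + 1) : ℤ)

lemma A_eq_zero {i k : ℕ} (h : i < k) : A i k = 0 :=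
  Nat.choose_eq_zero_of_lt (by omega)

lemma b_eq_zero {i k : ℕ} (h : i < k) : b i k = 0 := by
  simp [b, A_eq_zero h, A_eq_zero (show i < k + 1 by omega)]

lemma b_diag (i : ℕ) : b i i = 1 := by
  rw [b, A_eq_zero (show i < i + 1 by omega), A,
    show i + 1 + i = 2 * i + 1 by ring, Nat.choose_self]
  simp

lemma A_symm {i k : ℕ} (h : k ≤ i) : (2 * i + 1).choose (i - k) = A i k := by
  rw [A, ← Nat.choose_symm (show i + 1 + k ≤ 2 * i + 1 by omega)]
  congr 1
  omega

lemma sum_ext {M : Type*} [AddCommMonoid M] (f : ℕ → M) {t R : ℕ} (h : t ≤ R)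
    (hf : ∀ k, t ≤ k → f k = 0) :
    ∑ k ∈ range R, f k = ∑ k ∈ range t, f k := by
  refine (Finset.sum_subset (Finset.range_subset_range.mpr h) ?_).symm
  intro x _ hx
  exact hf x (by simpa using hx)

lemma split_range {M : Type*} [AddCommMonoid M] (f : ℕ → M) (p q : ℕ) :
    ∑ a ∈ range (p + q), f a = (∑ a ∈ range p, f a) + ∑ k ∈ range q, f (p + k) := by
  induction q with
  | zero => simp
  | succ q ih =>
      rw [show p + (q + 1) = (p + q) + 1 by ring, Finset.sum_range_succ, ih,
        Finset.sum_range_succ, add_assoc]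

lemma vandermonde_sum (i j k : ℕ) :
    (2 * (i + j + 1)).choose k =
      ∑ a ∈ range (k + 1), (2 * i + 1).choose a * (2 * j + 1).choose (k - a) := by
  rw [show 2 * (i + j + 1) = (2 * i + 1) + (2 * j + 1) by ring, Nat.add_choose_eq,
    Finset.Nat.sum_antidiagonal_eq_sum_range_succ_mk]

/-- Vandermonde identity, part 1. -/
lemma V1 (i j : ℕ) :
    (2 * (i + j + 1)).choose (i + j + 1) =
      (∑ k ∈ range (i + 1), A i k * A j k) + ∑ k ∈ range (j + 1), A i k * A j k := by
  rw [vandermonde_sum, show i + j + 1 + 1 = (i + 1) + (j + 1) by ring, split_range,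
    ← Finset.sum_range_reflect]
  congr 1
  · refine Finset.sum_congr rfl fun k hk => ?_
    rw [mem_range] at hk
    rw [show i + 1 - 1 - k = i - k by omega, A_symm (show k ≤ i by omega),
      show i + j + 1 - (i - k) = j + 1 + k by omega]
    rfl
  · refine Finset.sum_congr rfl fun k hk => ?_
    rw [mem_range] at hk
    rw [show i + j + 1 - (i + 1 + k) = j - k by omega, A_symm (show k ≤ j by omega)]
    rfl

/-- Vandermonde identity, part 2. -/
lemma V2 (i j : ℕ) :
    (2 * (i + j + 1)).choose (i + j + 2) =
      (∑ k ∈ range (i + 1), A i k * A j (k + 1)) +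
      ((∑ k ∈ range (j + 1), A i (k + 1) * A j k) + A i 0 * A j 0) := by
  rw [vandermonde_sum, show i + j + 2 + 1 = (i + 1) + (j + 2) by ring, split_range,
    ← Finset.sum_range_reflect]
  congr 1
  · refine Finset.sum_congr rfl fun k hk => ?_
    rw [mem_range] at hk
    rw [show i + 1 - 1 - k = i - k by omega, A_symm (show k ≤ i by omega),
      show i + j + 2 - (i - k) = j + 1 + (k + 1) by omega]
    rfl
  · rw [Finset.sum_range_succ']
    congr 1
    · refine Finset.sum_congr rfl fun k hk => ?_
      rw [mem_range] at hk
      rw [show i + j + 2 - (i + 1 + (k + 1)) = j - k by omega, A_symm (show k ≤ j by omega)]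
      rfl
    · rw [show i + j + 2 - (i + 1 + 0) = j + 1 by omega]
      rfl

lemma catalan_sub (m : ℕ) :
    (catalan m : ℤ) = ((2 * m).choose m : ℤ) - ((2 * m).choose (m + 1) : ℤ) := by
  have h1 : (m + 1) * catalan m = (2 * m).choose m := by
    rw [succ_mul_catalan_eq_centralBinom, Nat.centralBinom]
  have h2 : (2 * m).choose (m + 1) * (m + 1) = (2 * m).choose m * m := by
    rw [Nat.choose_succ_right_eq]
    congr 1
    omega
  have h : (catalan m + (2 * m).choose (m + 1)) * (m + 1) = (2 * m).choose m * (m + 1) := by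
    rw [add_mul, mul_comm (catalan m) (m + 1), h1, h2]
    ring
  have h3 : catalan m + (2 * m).choose (m + 1) = (2 * m).choose m :=
    Nat.eq_of_mul_eq_mul_right (by omega) h
  have := congrArg (fun x : ℕ => (x : ℤ)) h3
  push_cast at this
  linarith

lemma hz1 (i j k : ℕ) (hk : i + 1 ≤ k) : A i k * A j k = 0 := by
  rw [A_eq_zero (show i < k by omega), zero_mul]

lemma hz2 (i j k : ℕ) (hk : j + 1 ≤ k) : A i k * A j k = 0 := by
  rw [A_eq_zero (i := j) (show j < k by omega), mul_zero]

lemma hz3 (i j k : ℕ) (hk : i + 1 ≤ k) : A i k * A j (k + 1) = 0 := by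
  rw [A_eq_zero (show i < k by omega), zero_mul]

lemma hz4 (i j k : ℕ) (hk : j + 1 ≤ k) : A i (k + 1) * A j k = 0 := by
  rw [A_eq_zero (i := j) (show j < k by omega), mul_zero]

/-- Key identity: rows of the ballot-number matrix have inner products equal to
shifted Catalan numbers. -/
lemma key (i j : ℕ) :
    ∑ k ∈ range (i + j + 2), b i k * b j k = (catalan (i + j + 1) : ℤ) := by
  have hshift : ∑ k ∈ range (i + j + 2), (A i (k + 1) : ℤ) * (A j (k + 1) : ℤ)
      = (∑ k ∈ range (i + j + 2), (A i k : ℤ) * (A j k : ℤ))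
        - (A i 0 : ℤ) * (A j 0 : ℤ) := by
    have h := Finset.sum_range_succ' (fun k => (A i k : ℤ) * (A j k : ℤ)) (i + j + 2)
    have hRz : (A i (i + j + 2) : ℤ) * (A j (i + j + 2) : ℤ) = 0 := by
      rw [A_eq_zero (show i < i + j + 2 by omega)]; simp
    rw [Finset.sum_range_succ, hRz, add_zero] at h
    linarith
  have expand : ∑ k ∈ range (i + j + 2), b i k * b j k
      = (∑ k ∈ range (i + j + 2), (A i k : ℤ) * (A j k : ℤ))
        + (∑ k ∈ range (i + j + 2), (A i (k + 1) : ℤ) * (A j (k + 1) : ℤ))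
        - (∑ k ∈ range (i + j + 2), (A i k : ℤ) * (A j (k + 1) : ℤ))
        - (∑ k ∈ range (i + j + 2), (A i (k + 1) : ℤ) * (A j k : ℤ)) := by
    rw [← Finset.sum_add_distrib, ← Finset.sum_sub_distrib, ← Finset.sum_sub_distrib]
    refine Finset.sum_congr rfl fun k _ => ?_
    simp only [b]
    ring
  have v1 := V1 i j
  have v2 := V2 i j
  rw [← sum_ext (fun k => A i k * A j k) (show i + 1 ≤ i + j + 2 by omega) (hz1 i j),
    ← sum_ext (fun k => A i k * A j k) (show j + 1 ≤ i + j + 2 by omega) (hz2 i j)] at v1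
  rw [← sum_ext (fun k => A i k * A j (k + 1)) (show i + 1 ≤ i + j + 2 by omega) (hz3 i j),
    ← sum_ext (fun k => A i (k + 1) * A j k) (show j + 1 ≤ i + j + 2 by omega) (hz4 i j)] at v2
  have v1' := congrArg (fun x : ℕ => (x : ℤ)) v1
  have v2' := congrArg (fun x : ℕ => (x : ℤ)) v2
  push_cast at v1' v2'
  rw [expand, hshift, catalan_sub (i + j + 1)]
  linarith

end HankelCatalanAux

open HankelCatalanAux in
theorem hankel_shifted_catalan_det (n : ℕ) :
    (Matrix.of fun i j : Fin (n + 1) => (catalan ((i : ℕ) + (j : ℕ) + 1) : ℤ)).det = 1 := by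
  classical
  set B : Matrix (Fin (n + 1)) (Fin (n + 1)) ℤ :=
    Matrix.of fun i k : Fin (n + 1) => b (i : ℕ) (k : ℕ) with hB
  have hfact : (Matrix.of fun i j : Fin (n + 1) => (catalan ((i : ℕ) + (j : ℕ) + 1) : ℤ))
      = B * B.transpose := by
    ext i j
    rw [Matrix.mul_apply]
    simp only [hB, Matrix.transpose_apply, Matrix.of_apply]
    rw [Fin.sum_univ_eq_sum_range (fun k => b (i : ℕ) k * b (j : ℕ) k) (n + 1)]
    have hz : ∀ k, (i : ℕ) + 1 ≤ k → b (i : ℕ) k * b (j : ℕ) k = 0 := fun k hk => by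
      rw [b_eq_zero (show (i : ℕ) < k by omega), zero_mul]
    rw [sum_ext _ (show (i : ℕ) + 1 ≤ n + 1 by omega) hz,
      ← sum_ext _ (show (i : ℕ) + 1 ≤ (i : ℕ) + (j : ℕ) + 2 by omega) hz, key]
  have hBtri : B.BlockTriangular OrderDual.toDual := by
    intro i j hij
    exact b_eq_zero (show (i : ℕ) < (j : ℕ) from hij)
  have hBdet : B.det = 1 := by
    rw [Matrix.det_of_lowerTriangular B hBtri]
    simp [hB, b_diag]
  rw [hfact, Matrix.det_mul, Matrix.det_transpose, hBdet]
  norm_num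
end

section
/- For all n ≥ 0, det((C_{i+j} + C_{i+j+1})_{i,j=0}^{n}) = F_{2n+3}, where F_k is the k-th Fibonacci number. -/
open Finset

noncomputable def bb (i k : ℕ) : ℚ :=
  (Nat.choose (2*i) (i+k) : ℚ) - (Nat.choose (2*i) (i+k+1) : ℚ)

lemma bb_eq_zero {i k : ℕ} (h : i < k) : bb i k = 0 := by
  unfold bb
  rw [Nat.choose_eq_zero_of_lt (by omega), Nat.choose_eq_zero_of_lt (by omega)]
  simp

lemma bb_rec0 (i : ℕ) : bb (i+1) 0 = bb i 0 + bb i 1 := by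
  unfold bb
  have h1 : 2*(i+1) = (2*i+1)+1 := by ring
  rw [h1]
  have e1 : (i+1) + 0 = i + 1 := by omega
  rw [e1]
  rw [Nat.choose_succ_succ' (2*i+1) i, Nat.choose_succ_succ' (2*i+1) (i+1)]
  have hsymm : Nat.choose (2*i+1) i = Nat.choose (2*i+1) (i+1) := by
    have := Nat.choose_symm (n := 2*i+1) (k := i+1) (by omega)
    have h2 : 2*i+1 - (i+1) = i := by omega
    rw [h2] at this
    exact this
  rw [hsymm, Nat.choose_succ_succ' (2*i) i, Nat.choose_succ_succ' (2*i) (i+1)]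
  push_cast
  ring

lemma bb_rec (i k : ℕ) : bb (i+1) (k+1) = bb i k + 2 * bb i (k+1) + bb i (k+2) := by
  have p : ∀ m, Nat.choose (2*i+2) (m+2)
      = Nat.choose (2*i) m + 2 * Nat.choose (2*i) (m+1) + Nat.choose (2*i) (m+2) := by
    intro m
    have h1 : Nat.choose (2*i+2) (m+2) = Nat.choose (2*i+1) (m+1) + Nat.choose (2*i+1) (m+2) :=
      Nat.choose_succ_succ' (2*i+1) (m+1)
    have h2 : Nat.choose (2*i+1) (m+1) = Nat.choose (2*i) m + Nat.choose (2*i) (m+1) :=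
      Nat.choose_succ_succ' (2*i) m
    have h3 : Nat.choose (2*i+1) (m+2) = Nat.choose (2*i) (m+1) + Nat.choose (2*i) (m+2) :=
      Nat.choose_succ_succ' (2*i) (m+1)
    omega
  unfold bb
  have e1 : (i+1)+(k+1) = (i+k)+2 := by omega
  have e2 : (i+1)+(k+1)+1 = (i+k+1)+2 := by omega
  have e3 : 2*(i+1) = 2*i+2 := by ring
  rw [e3, e1, show i+k+2+1 = (i+k+1)+2 from rfl, p (i+k), p (i+k+1)]
  simp only [show i+(k+1)=i+k+1 from rfl, show i+(k+2)=i+k+2 from rfl,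
    show i+k+1+1 = i+k+2 from rfl, show i+k+1+2 = i+k+3 from rfl,
    show i+k+2+1 = i+k+3 from rfl]
  push_cast
  ring

lemma bb_catalan (i : ℕ) : bb i 0 = (catalan i : ℚ) := by
  unfold bb
  have hA : (((i:ℚ))+1) * (catalan i : ℚ) = (Nat.choose (2*i) i : ℚ) := by
    exact_mod_cast congrArg (Nat.cast : ℕ → ℚ) (succ_mul_catalan_eq_centralBinom i)
  have hB : (Nat.choose (2*i) (i+1) : ℚ) * ((i:ℚ)+1) = (Nat.choose (2*i) i : ℚ) * i := by
    have := Nat.choose_succ_right_eq (2*i) i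
    rw [show 2*i - i = i by omega] at this
    exact_mod_cast congrArg (Nat.cast : ℕ → ℚ) this
  have hne : ((i:ℚ)+1) ≠ 0 := by positivity
  rw [show i+0 = i by omega]
  apply mul_left_cancel₀ hne
  linear_combination -hA - hB

lemma sum_bb_trunc {i N : ℕ} (j : ℕ) (h : i + 1 ≤ N) :
    ∑ k ∈ range N, bb i k * bb j k = ∑ k ∈ range (i+1), bb i k * bb j k := by
  refine (Finset.sum_subset (Finset.range_subset_range.2 h) fun x _ hx => ?_).symm
  rw [bb_eq_zero (by simp at hx ⊢; omega), zero_mul]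

lemma expand (i j m : ℕ) (hj : j < m) :
    ∑ k ∈ range (m+2), bb (i+1) k * bb j k
    = (∑ k ∈ range (m+1), bb i k * bb j (k+1)) + (∑ k ∈ range (m+1), bb j k * bb i (k+1))
      + 2 * (∑ k ∈ range (m+2), bb i k * bb j k) - bb i 0 * bb j 0 := by
  rw [Finset.sum_range_succ' (fun k => bb (i+1) k * bb j k) (m+1)]
  have step1 : ∑ k ∈ range (m+1), bb (i+1) (k+1) * bb j (k+1)
      = ∑ k ∈ range (m+1), (bb i k * bb j (k+1) + 2 * (bb i (k+1) * bb j (k+1))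
          + bb i (k+2) * bb j (k+1)) := by
    refine Finset.sum_congr rfl fun k _ => ?_
    rw [bb_rec]; ring
  rw [step1, bb_rec0]
  rw [Finset.sum_add_distrib, Finset.sum_add_distrib, ← Finset.mul_sum]
  have h2 : ∑ k ∈ range (m+1), bb i (k+1) * bb j (k+1)
      = (∑ k ∈ range (m+2), bb i k * bb j k) - bb i 0 * bb j 0 := by
    rw [Finset.sum_range_succ' (fun k => bb i k * bb j k) (m+1)]; ring
  have h3 : ∑ k ∈ range (m+1), bb i (k+2) * bb j (k+1)
      = (∑ k ∈ range (m+1), bb j k * bb i (k+1)) - bb j 0 * bb i 1 := by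
    rw [Finset.sum_range_succ (fun k => bb i (k+2) * bb j (k+1)) m,
        bb_eq_zero (show j < m+1 by omega), mul_zero, add_zero,
        Finset.sum_range_succ' (fun k => bb j k * bb i (k+1)) m]
    refine eq_sub_of_add_eq ?_
    rw [add_left_inj]
    exact Finset.sum_congr rfl fun k _ => by ring
  rw [h2, h3]
  ring

lemma transfer (i j m : ℕ) (hi : i < m) (hj : j < m) :
    ∑ k ∈ range (m+2), bb (i+1) k * bb j k = ∑ k ∈ range (m+2), bb i k * bb (j+1) k := by
  have hc : ∀ (f g : ℕ → ℚ) (s : Finset ℕ), ∑ k ∈ s, f k * g k = ∑ k ∈ s, g k * f k :=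
    fun f g s => Finset.sum_congr rfl fun x _ => mul_comm _ _
  rw [expand i j m hj, hc (fun k => bb i k) (fun k => bb (j+1) k), expand j i m hi,
      hc (fun k => bb j k) (fun k => bb i k)]
  ring

lemma bb_sum_catalan : ∀ i j : ℕ, ∑ k ∈ range (i+j+2), bb i k * bb j k = (catalan (i+j) : ℚ) := by
  intro i
  induction i with
  | zero =>
    intro j
    rw [sum_bb_trunc j (by omega), Finset.sum_range_one,
        show bb 0 0 = 1 by unfold bb; norm_num, one_mul, bb_catalan]
    norm_num
  | succ i ih =>
    intro j
    have h1 : i+1+j+2 = (i+j+1)+2 := by omega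
    rw [h1, transfer i j (i+j+1) (by omega) (by omega)]
    have h2 : (i+j+1)+2 = i+(j+1)+2 := by omega
    rw [h2, ih (j+1), show i+(j+1) = i+1+j from by omega]

lemma bb_sum_catalan' (i j N : ℕ) (hN : i < N) :
    ∑ k ∈ range N, bb i k * bb j k = (catalan (i+j) : ℚ) := by
  rw [sum_bb_trunc j (by omega), ← sum_bb_trunc j (show i+1 ≤ i+j+2 by omega), bb_sum_catalan]

noncomputable def tri (i j : ℕ) : ℚ :=
  if i = j then (if i = 0 then 2 else 3) else if i+1 = j then 1 else if j+1 = i then 1 else 0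

noncomputable def ll (i k : ℕ) : ℚ :=
  if i = k then 1 else if i = k+1 then (Nat.fib (2*k+1) : ℚ)/(Nat.fib (2*k+3) : ℚ) else 0

noncomputable def dd (k : ℕ) : ℚ := (Nat.fib (2*k+3) : ℚ)/(Nat.fib (2*k+1) : ℚ)

lemma fib_ne (m : ℕ) (hm : 0 < m) : (Nat.fib m : ℚ) ≠ 0 := by
  have := Nat.fib_pos.mpr hm
  positivity

lemma fib_three_identity (m : ℕ) : (Nat.fib (2*m+5) : ℚ) + Nat.fib (2*m+1) = 3 * Nat.fib (2*m+3) := by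
  have h1 : Nat.fib (2*m+5) = Nat.fib (2*m+3) + Nat.fib (2*m+4) := Nat.fib_add_two
  have h2 : Nat.fib (2*m+4) = Nat.fib (2*m+2) + Nat.fib (2*m+3) := Nat.fib_add_two
  have h3 : Nat.fib (2*m+3) = Nat.fib (2*m+1) + Nat.fib (2*m+2) := Nat.fib_add_two
  have : Nat.fib (2*m+5) + Nat.fib (2*m+1) = 3 * Nat.fib (2*m+3) := by omega
  exact_mod_cast congrArg (Nat.cast : ℕ → ℚ) this

lemma tri_row_sum (k j M : ℕ) (hk : k < M) (hj : j < M) :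
    ∑ l ∈ range M, tri k l * bb j l = bb j k + bb (j+1) k := by
  rcases k with _ | k'
  · have hpt : ∀ l, tri 0 l * bb j l
        = (if l = 0 then 2 * bb j l else 0) + (if l = 1 then bb j l else 0) := by
      intro l
      unfold tri
      split_ifs <;> first | ring1 | (exfalso; omega) | exact ‹False›.elim
    rw [Finset.sum_congr rfl fun l _ => hpt l, Finset.sum_add_distrib,
        Finset.sum_ite_eq' (range M) 0, Finset.sum_ite_eq' (range M) 1]
    have h0 : (0:ℕ) ∈ range M := by simp; omega
    by_cases h1 : (1:ℕ) ∈ range M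
    · rw [if_pos h0, if_pos h1, bb_rec0]; ring
    · have : j = 0 := by simp at h1; omega
      subst this
      rw [if_pos h0, if_neg h1, bb_rec0]
      have : bb 0 1 = 0 := bb_eq_zero (by omega)
      rw [this]; ring
  · have hpt : ∀ l, tri (k'+1) l * bb j l
        = (if l = k' then bb j l else 0) + (if l = k'+1 then 3 * bb j l else 0)
          + (if l = k'+2 then bb j l else 0) := by
      intro l
      unfold tri
      split_ifs <;> first | ring1 | (exfalso; omega) | exact ‹False›.elim
    rw [Finset.sum_congr rfl fun l _ => hpt l, Finset.sum_add_distrib, Finset.sum_add_distrib,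
        Finset.sum_ite_eq' (range M) k', Finset.sum_ite_eq' (range M) (k'+1),
        Finset.sum_ite_eq' (range M) (k'+2)]
    rw [if_pos (by simp; omega : k' ∈ range M), if_pos (by simp; omega : k'+1 ∈ range M)]
    have hlast : (if k'+2 ∈ range M then bb j (k'+2) else 0) = bb j (k'+2) := by
      split_ifs with h
      · rfl
      · rw [bb_eq_zero (by simp at h; omega)]
    rw [hlast, bb_rec]
    ring

lemma fib1_ne (m : ℕ) : (Nat.fib (2*m+1) : ℚ) ≠ 0 := fib_ne _ (by omega)

lemma fib3_ne (m : ℕ) : (Nat.fib (2*m+3) : ℚ) ≠ 0 := fib_ne _ (by omega)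

lemma ldl (i j M : ℕ) (hi : i < M) (hj : j < M) :
    ∑ k ∈ range M, ll i k * dd k * ll j k = tri i j := by
  by_cases hij : i = j
  · subst hij
    rcases i with _ | m
    · have hpt : ∀ k, ll 0 k * dd k * ll 0 k = (if k = 0 then dd k else 0) := by
        intro k
        unfold ll
        split_ifs <;> first | ring1 | (exfalso; omega) | exact ‹False›.elim
      rw [Finset.sum_congr rfl fun k _ => hpt k, Finset.sum_ite_eq' (range M) 0,
          if_pos (by simp; omega : (0:ℕ) ∈ range M)]
      unfold dd tri
      norm_num [Nat.fib_one]
    · have hpt : ∀ k, ll (m+1) k * dd k * ll (m+1) k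
          = (if k = m then (Nat.fib (2*k+1) : ℚ)/(Nat.fib (2*k+3) : ℚ) * dd k
              * ((Nat.fib (2*k+1) : ℚ)/(Nat.fib (2*k+3) : ℚ)) else 0)
            + (if k = m+1 then dd k else 0) := by
        intro k
        unfold ll
        split_ifs <;> first | ring1 | (exfalso; omega) | exact ‹False›.elim
      rw [Finset.sum_congr rfl fun k _ => hpt k, Finset.sum_add_distrib,
          Finset.sum_ite_eq' (range M) m, Finset.sum_ite_eq' (range M) (m+1),
          if_pos (by simp; omega : m ∈ range M), if_pos (by simp; omega : m+1 ∈ range M)]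
      unfold dd tri
      rw [if_pos rfl, if_neg (by omega), show 2*(m+1)+3 = 2*m+5 from by ring,
          show 2*(m+1)+1 = 2*m+3 from by ring]
      have key := fib_three_identity m
      have h1 := fib1_ne m
      have h3 := fib3_ne m
      have h5 : (Nat.fib (2*m+5) : ℚ) ≠ 0 := fib_ne _ (by omega)
      field_simp
      linear_combination key
  · by_cases hj1 : j = i + 1
    · subst hj1
      have hpt : ∀ k, ll i k * dd k * ll (i+1) k
          = (if k = i then dd k * ((Nat.fib (2*k+1) : ℚ)/(Nat.fib (2*k+3) : ℚ)) else 0) := by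
        intro k
        unfold ll
        split_ifs <;> first | ring1 | (exfalso; omega) | exact ‹False›.elim
      rw [Finset.sum_congr rfl fun k _ => hpt k, Finset.sum_ite_eq' (range M) i,
          if_pos (by simp; omega : i ∈ range M)]
      unfold dd tri
      rw [if_neg (by omega), if_pos rfl]
      field_simp
    · by_cases hi1 : i = j + 1
      · subst hi1
        have hpt : ∀ k, ll (j+1) k * dd k * ll j k
            = (if k = j then ((Nat.fib (2*k+1) : ℚ)/(Nat.fib (2*k+3) : ℚ)) * dd k else 0) := by
          intro k
          unfold ll
          split_ifs <;> first | ring1 | (exfalso; omega) | exact ‹False›.elim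
        rw [Finset.sum_congr rfl fun k _ => hpt k, Finset.sum_ite_eq' (range M) j,
            if_pos (by simp; omega : j ∈ range M)]
        unfold dd tri
        rw [if_neg (by omega), if_neg (by omega), if_pos rfl]
        field_simp
      · have hpt : ∀ k, ll i k * dd k * ll j k = 0 := by
          intro k
          unfold ll
          split_ifs <;> first | ring1 | (exfalso; omega) | exact ‹False›.elim
        rw [Finset.sum_congr rfl fun k _ => hpt k, Finset.sum_const_zero]
        unfold tri
        rw [if_neg hij, if_neg (by omega), if_neg (by omega)]

lemma bb_diag (i : ℕ) : bb i i = 1 := by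
  unfold bb
  rw [show i + i = 2*i from by ring, Nat.choose_self, Nat.choose_eq_zero_of_lt (by omega)]
  norm_num

lemma ll_diag (i : ℕ) : ll i i = 1 := by unfold ll; simp

lemma ll_eq_zero {i k : ℕ} (h : i < k) : ll i k = 0 := by
  unfold ll; rw [if_neg (by omega), if_neg (by omega)]

lemma prod_dd : ∀ N : ℕ, ∏ k ∈ range (N+1), dd k = (Nat.fib (2*N+3) : ℚ) := by
  intro N
  induction N with
  | zero =>
    rw [Finset.prod_range_one]
    unfold dd
    norm_num [Nat.fib_one]
  | succ N ih =>
    rw [Finset.prod_range_succ, ih, show 2*(N+1)+3 = 2*N+5 from by ring]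
    unfold dd
    rw [show 2*(N+1)+3 = 2*N+5 from by ring, show 2*(N+1)+1 = 2*N+3 from by ring]
    rw [mul_comm, div_mul_cancel₀ _ (fib_ne (2*N+3) (by omega))]

theorem hankel_catalan_sum_det_fib (n : ℕ) :
    (Matrix.of fun i j : Fin (n + 1) =>
      (catalan ((i : ℕ) + (j : ℕ)) + catalan ((i : ℕ) + (j : ℕ) + 1) : ℤ)).det
      = Nat.fib (2 * n + 3) := by
  set A : Matrix (Fin (n+1)) (Fin (n+1)) ℤ := Matrix.of fun i j : Fin (n + 1) =>
      (catalan ((i : ℕ) + (j : ℕ)) + catalan ((i : ℕ) + (j : ℕ) + 1) : ℤ) with hA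
  set Bm : Matrix (Fin (n+1)) (Fin (n+1)) ℚ := Matrix.of fun i k : Fin (n+1) => bb i k with hBm
  set Tm : Matrix (Fin (n+1)) (Fin (n+1)) ℚ := Matrix.of fun i j : Fin (n+1) => tri i j with hTm
  set Lm : Matrix (Fin (n+1)) (Fin (n+1)) ℚ := Matrix.of fun i k : Fin (n+1) => ll i k with hLm
  set Dm : Matrix (Fin (n+1)) (Fin (n+1)) ℚ :=
    Matrix.diagonal (fun k : Fin (n+1) => dd k) with hDm
  have hinner : ∀ k j : Fin (n+1), (Tm * Bm.transpose) k j
      = bb (j:ℕ) (k:ℕ) + bb ((j:ℕ)+1) (k:ℕ) := by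
    intro k j
    rw [Matrix.mul_apply]
    simp only [hTm, hBm, Matrix.transpose_apply, Matrix.of_apply]
    rw [Fin.sum_univ_eq_sum_range (fun l => tri (k:ℕ) l * bb (j:ℕ) l) (n+1)]
    exact tri_row_sum k j (n+1) k.isLt j.isLt
  have h1 : A.map (Int.cast : ℤ → ℚ) = Bm * (Tm * Bm.transpose) := by
    ext i j
    rw [Matrix.mul_apply]
    have hs : ∀ k : Fin (n+1), Bm i k * (Tm * Bm.transpose) k j
        = bb (i:ℕ) (k:ℕ) * bb (j:ℕ) (k:ℕ) + bb (i:ℕ) (k:ℕ) * bb ((j:ℕ)+1) (k:ℕ) := by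
      intro k
      rw [hinner k j]
      simp only [hBm, Matrix.of_apply]
      ring
    rw [Finset.sum_congr rfl fun k _ => hs k, Finset.sum_add_distrib,
        Fin.sum_univ_eq_sum_range (fun k => bb (i:ℕ) k * bb (j:ℕ) k) (n+1),
        Fin.sum_univ_eq_sum_range (fun k => bb (i:ℕ) k * bb ((j:ℕ)+1) k) (n+1),
        bb_sum_catalan' _ _ _ i.isLt, bb_sum_catalan' _ _ _ i.isLt]
    simp only [hA, Matrix.map_apply, Matrix.of_apply]
    push_cast
    rw [show (i:ℕ)+((j:ℕ)+1) = (i:ℕ)+(j:ℕ)+1 from by ring]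
  have h2 : Tm = Lm * (Dm * Lm.transpose) := by
    ext i j
    rw [Matrix.mul_apply]
    have hs : ∀ k : Fin (n+1), Lm i k * (Dm * Lm.transpose) k j
        = ll (i:ℕ) (k:ℕ) * dd (k:ℕ) * ll (j:ℕ) (k:ℕ) := by
      intro k
      rw [hDm, Matrix.diagonal_mul]
      simp only [hLm, Matrix.transpose_apply, Matrix.of_apply]
      ring
    rw [Finset.sum_congr rfl fun k _ => hs k,
        Fin.sum_univ_eq_sum_range (fun k => ll (i:ℕ) k * dd k * ll (j:ℕ) k) (n+1),
        ldl _ _ _ i.isLt j.isLt]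
    simp [hTm]
  have hdetB : Bm.det = 1 := by
    rw [Matrix.det_of_lowerTriangular Bm (fun i j hij => by
      simp only [hBm, Matrix.of_apply]
      exact bb_eq_zero (by exact_mod_cast hij))]
    simp [hBm, bb_diag]
  have hdetL : Lm.det = 1 := by
    rw [Matrix.det_of_lowerTriangular Lm (fun i j hij => by
      simp only [hLm, Matrix.of_apply]
      exact ll_eq_zero (by exact_mod_cast hij))]
    simp [hLm, ll_diag]
  have hdetD : Dm.det = (Nat.fib (2*n+3) : ℚ) := by
    rw [hDm, Matrix.det_diagonal, Fin.prod_univ_eq_prod_range (fun k => dd k) (n+1), prod_dd]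
  have hq : ((A.det : ℤ) : ℚ) = (Nat.fib (2*n+3) : ℚ) := by
    rw [show ((A.det : ℤ) : ℚ) = (A.map (Int.cast : ℤ → ℚ)).det from
      RingHom.map_det (Int.castRingHom ℚ) A, h1, h2]
    simp only [Matrix.det_mul, Matrix.det_transpose, hdetB, hdetL, hdetD]
    ring
  exact_mod_cast hq
end

section
/- For all n ≥ 0, det((C_{i+j+1} + C_{i+j+2})_{i,j=0}^{n}) = F_{2n+4}, where F_k is the k-th Fibonacci number. -/
/-!
The ballot numbers `ballot m k = C(2m+1, m+k+1) - C(2m+1, m+k+2)` form a lower unitriangular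
matrix `L` whose rows satisfy `row (m+1) = row m * J`, where `J` is the symmetric tridiagonal
matrix with `2` on the diagonal and `1` beside it. Since `J` is symmetric,
`⟨row (i+1), row j⟩ = ⟨row i, row (j+1)⟩`, so the Gram matrix of the rows is a Hankel matrix:
`⟨row i, row j⟩ = ballot (i+j) 0 = C_{i+j+1}`. Hence the matrix of the theorem is
`L (1 + J) Lᵀ`, whose determinant is that of the tridiagonal matrix with `3` on the diagonal
and `1` beside it; these determinants satisfy `D (n+2) = 3 D (n+1) - D n`, the recurrence of
`F (2n+2)`.
-/

open Finset Matrix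

def ballot (m k : ℕ) : ℤ := (2 * m + 1).choose (m + k + 1) - (2 * m + 1).choose (m + k + 2)

lemma ballot_eq_zero_of_lt {m k : ℕ} (h : m < k) : ballot m k = 0 := by
  simp [ballot, Nat.choose_eq_zero_of_lt, show 2 * m + 1 < m + k + 1 by omega,
    show 2 * m + 1 < m + k + 2 by omega]

lemma ballot_self (m : ℕ) : ballot m m = 1 := by
  simp [ballot, show m + m + 1 = 2 * m + 1 by omega, Nat.choose_eq_zero_of_lt,
    show 2 * m + 1 < m + m + 2 by omega]

lemma ballot_zero_left (k : ℕ) : ballot 0 k = if k = 0 then 1 else 0 := by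
  split_ifs with h
  · exact h ▸ ballot_self 0
  · exact ballot_eq_zero_of_lt (Nat.pos_of_ne_zero h)

lemma ballot_zero_right (m : ℕ) : ballot m 0 = catalan (m + 1) := by
  have hstep := Nat.choose_succ_right_eq (2 * m + 1) (m + 1)
  have hcentral := succ_mul_catalan_eq_centralBinom (m + 1)
  rw [show 2 * m + 1 - (m + 1) = m by omega] at hstep
  rw [Nat.centralBinom_eq_two_mul_choose, show 2 * (m + 1) = 2 * m + 1 + 1 by ring,
    Nat.choose_succ_succ, ← Nat.choose_symm_half] at hcentral
  refine mul_left_cancel₀ (show ((m : ℤ) + 2) ≠ 0 by positivity) ?_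
  simp only [ballot, add_zero]
  zify at hstep hcentral
  push_cast [Nat.succ_eq_add_one] at hcentral ⊢
  linear_combination -hcentral - hstep

lemma Nat.choose_add_two_add_two (n r : ℕ) :
    (n + 2).choose (r + 2) = n.choose r + 2 * n.choose (r + 1) + n.choose (r + 2) := by
  simp only [Nat.choose_succ_succ]
  ring

lemma ballot_succ_succ (m k : ℕ) :
    ballot (m + 1) (k + 1) = ballot m k + 2 * ballot m (k + 1) + ballot m (k + 2) := by
  have h₁ := Nat.choose_add_two_add_two (2 * m + 1) (m + k + 1)
  have h₂ := Nat.choose_add_two_add_two (2 * m + 1) (m + k + 2)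
  simp only [ballot, show 2 * (m + 1) + 1 = 2 * m + 1 + 2 by ring,
    show m + 1 + (k + 1) + 1 = m + k + 1 + 2 by ring,
    show m + 1 + (k + 1) + 2 = m + k + 2 + 2 by ring, h₁, h₂]
  push_cast
  ring_nf

lemma ballot_succ_zero (m : ℕ) : ballot (m + 1) 0 = 2 * ballot m 0 + ballot m 1 := by
  have h₁ := Nat.choose_add_two_add_two (2 * m + 1) m
  have h₂ := Nat.choose_add_two_add_two (2 * m + 1) (m + 1)
  simp only [ballot, show 2 * (m + 1) + 1 = 2 * m + 1 + 2 by ring,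
    show m + 1 + 0 + 1 = m + 2 by ring, show m + 1 + 0 + 2 = m + 1 + 2 by ring,
    h₁, h₂, Nat.choose_symm_half]
  push_cast
  ring_nf

def tridiag {R : Type*} [Zero R] (a b : R) (i j : ℕ) : R :=
  if i = j then a else if i = j + 1 ∨ j = i + 1 then b else 0

def tridiagMatrix {R : Type*} [Zero R] (n : ℕ) (a b : R) : Matrix (Fin n) (Fin n) R :=
  of fun i j => tridiag a b i j

section tridiag

variable {R : Type*}

lemma tridiag_comm [Zero R] (a b : R) (i j : ℕ) : tridiag a b i j = tridiag a b j i := by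
  unfold tridiag
  split_ifs <;> first | rfl | omega

lemma tridiag_succ_succ [Zero R] (a b : R) (i j : ℕ) :
    tridiag a b (i + 1) (j + 1) = tridiag a b i j := by
  simp [tridiag]

section Sum

variable [CommSemiring R] {a b : R} {K : ℕ} {f : ℕ → R}

lemma sum_range_mul_ite_eq (hf : ∀ l, K ≤ l → f l = 0) (k : ℕ) (c : R) :
    ∑ l ∈ range K, f l * (if l = k then c else 0) = f k * c := by
  simp_rw [mul_ite, mul_zero, sum_ite_eq', mem_range]
  split_ifs with hk
  · rfl
  · rw [hf k (not_lt.1 hk), zero_mul]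

lemma sum_range_mul_tridiag_zero (hf : ∀ l, K ≤ l → f l = 0) :
    ∑ l ∈ range K, f l * tridiag a b l 0 = a * f 0 + b * f 1 := by
  have h (l : ℕ) : tridiag a b l 0 = (if l = 0 then a else 0) + (if l = 1 then b else 0) := by
    unfold tridiag
    split_ifs <;> first | omega | simp_all
  simp_rw [h, mul_add, sum_add_distrib, sum_range_mul_ite_eq hf]
  ring

lemma sum_range_mul_tridiag_succ (hf : ∀ l, K ≤ l → f l = 0) (k : ℕ) :
    ∑ l ∈ range K, f l * tridiag a b l (k + 1) = b * f k + a * f (k + 1) + b * f (k + 2) := by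
  have h (l : ℕ) : tridiag a b l (k + 1) =
      (if l = k then b else 0) + (if l = k + 1 then a else 0) + (if l = k + 2 then b else 0) := by
    unfold tridiag
    split_ifs <;> first | omega | simp_all
  simp_rw [h, mul_add, sum_add_distrib, sum_range_mul_ite_eq hf]
  ring

end Sum

variable [CommRing R] (a b : R)

lemma one_add_tridiagMatrix (n : ℕ) : 1 + tridiagMatrix n a b = tridiagMatrix n (1 + a) b := by
  ext i j
  simp only [Matrix.add_apply, one_apply, tridiagMatrix, of_apply, tridiag, Fin.val_inj]
  split_ifs <;> simp_all

lemma det_tridiagMatrix_succ_succ (n : ℕ) :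
    (tridiagMatrix (n + 2) a b).det =
      a * (tridiagMatrix (n + 1) a b).det - b ^ 2 * (tridiagMatrix n a b).det := by
  rw [det_succ_row_zero, Fin.sum_univ_succ, Fin.sum_univ_succ]
  have hzero : ∑ j : Fin n, (-1) ^ (j.succ.succ : ℕ) * tridiagMatrix (n + 2) a b 0 j.succ.succ *
      ((tridiagMatrix (n + 2) a b).submatrix Fin.succ j.succ.succ.succAbove).det = 0 := by
    refine sum_eq_zero fun j _ => ?_
    simp [tridiagMatrix, tridiag]
  have hdiagMinor : (tridiagMatrix (n + 2) a b).submatrix Fin.succ (Fin.succAbove 0) =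
      tridiagMatrix (n + 1) a b := by
    ext i j
    simp [tridiagMatrix, tridiag_succ_succ]
  -- This minor has a single nonzero entry `b` in its first column.
  have hoffMinor : ((tridiagMatrix (n + 2) a b).submatrix Fin.succ (Fin.succ 0).succAbove).det =
      b * (tridiagMatrix n a b).det := by
    rw [det_succ_column_zero, Fin.sum_univ_succ]
    have hzero' : ∑ i : Fin n, (-1) ^ (i.succ : ℕ) *
        (tridiagMatrix (n + 2) a b).submatrix Fin.succ (Fin.succ 0).succAbove i.succ 0 *
        (((tridiagMatrix (n + 2) a b).submatrix Fin.succ (Fin.succ 0).succAbove).submatrix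
          i.succ.succAbove Fin.succ).det = 0 := by
      refine sum_eq_zero fun i _ => ?_
      simp [tridiagMatrix, tridiag]
    have hminor : ((tridiagMatrix (n + 2) a b).submatrix Fin.succ (Fin.succ 0).succAbove).submatrix
        (Fin.succAbove 0) Fin.succ = tridiagMatrix n a b := by
      ext i j
      simp [tridiagMatrix, tridiag_succ_succ]
    rw [hzero', hminor]
    simp [tridiagMatrix, tridiag]
  rw [hzero, hdiagMinor, hoffMinor]
  simp [tridiagMatrix, tridiag]
  ring

end tridiag

lemma fib_add_six (n : ℕ) : (Nat.fib (n + 6) : ℤ) = 3 * Nat.fib (n + 4) - Nat.fib (n + 2) := by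
  simp only [Nat.fib_add_two (n := n + 4), Nat.fib_add_two (n := n + 3),
    Nat.fib_add_two (n := n + 2)]
  push_cast
  ring

lemma det_tridiagMatrix_three_one (n : ℕ) :
    (tridiagMatrix n (3 : ℤ) 1).det = Nat.fib (2 * n + 2) := by
  induction n using Nat.twoStepInduction with
  | zero => simp
  | one => simp [tridiagMatrix, tridiag, Nat.fib_add_two]
  | more n ih₀ ih₁ =>
    rw [det_tridiagMatrix_succ_succ, ih₀, ih₁, show 2 * (n + 2) + 2 = 2 * n + 6 by ring,
      show 2 * (n + 1) + 2 = 2 * n + 4 by ring, fib_add_six]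
    ring

lemma ballot_succ_eq_sum {m K : ℕ} (hm : m < K) (k : ℕ) :
    ballot (m + 1) k = ∑ l ∈ range K, ballot m l * tridiag 2 1 l k := by
  have hf (l : ℕ) (hl : K ≤ l) : ballot m l = 0 := ballot_eq_zero_of_lt (by omega)
  cases k with
  | zero => rw [sum_range_mul_tridiag_zero hf, ballot_succ_zero]; ring
  | succ k => rw [sum_range_mul_tridiag_succ hf, ballot_succ_succ]; ring

lemma sum_ballot_succ_mul_ballot {i j K : ℕ} (hi : i < K) (hj : j < K) :
    ∑ k ∈ range K, ballot (i + 1) k * ballot j k =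
      ∑ k ∈ range K, ballot i k * ballot (j + 1) k := by
  simp_rw [ballot_succ_eq_sum hi, ballot_succ_eq_sum hj, sum_mul, mul_sum]
  rw [sum_comm]
  refine sum_congr rfl fun k _ => sum_congr rfl fun l _ => ?_
  rw [tridiag_comm]
  ring

lemma sum_range_ballot_mul {i K : ℕ} (hi : i < K) (g : ℕ → ℤ) :
    ∑ k ∈ range K, ballot i k * g k = ∑ k ∈ range (i + 1), ballot i k * g k := by
  refine (sum_subset (range_subset_range.2 hi) fun k _ hk => ?_).symm
  rw [ballot_eq_zero_of_lt (by simpa using hk), zero_mul]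

lemma sum_range_ballot_mul_ballot_of_add_lt {i j K : ℕ} (hK : i + j < K) :
    ∑ k ∈ range K, ballot i k * ballot j k = catalan (i + j + 1) := by
  induction i generalizing j with
  | zero =>
    simp_rw [ballot_zero_left, ite_mul, one_mul, zero_mul, sum_ite_eq', mem_range,
      if_pos (show 0 < K by omega), ballot_zero_right, zero_add]
  | succ i ih =>
    rw [sum_ballot_succ_mul_ballot (by omega) (by omega), ih (j := j + 1) (by omega),
      show i + (j + 1) + 1 = i + 1 + j + 1 by ring]

lemma sum_range_ballot_mul_ballot {i K : ℕ} (hi : i < K) (j : ℕ) :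
    ∑ k ∈ range K, ballot i k * ballot j k = catalan (i + j + 1) := by
  rw [sum_range_ballot_mul hi, ← sum_range_ballot_mul (Nat.lt_succ_of_le (Nat.le_add_right i j)),
    sum_range_ballot_mul_ballot_of_add_lt (Nat.lt_succ_self _)]

def ballotMatrix (n : ℕ) : Matrix (Fin n) (Fin n) ℤ := of fun i k => ballot i k

lemma det_ballotMatrix (n : ℕ) : (ballotMatrix n).det = 1 := by
  rw [det_of_isLowerTriangular (ballotMatrix n) fun i k h =>
    ballot_eq_zero_of_lt (show i < k from h)]
  simp [ballotMatrix, ballot_self]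

lemma ballotMatrix_mul_tridiagMatrix (n : ℕ) :
    ballotMatrix n * tridiagMatrix n 2 1 = of fun i k : Fin n => ballot (i + 1) k := by
  ext i k
  simp only [mul_apply, ballotMatrix, tridiagMatrix, of_apply, ballot_succ_eq_sum i.isLt]
  exact Fin.sum_univ_eq_sum_range (fun l => ballot i l * tridiag 2 1 l k) n

theorem hankel_shifted_catalan_sum_det_fib (n : ℕ) :
    (Matrix.of fun i j : Fin (n + 1) =>
      (catalan ((i : ℕ) + (j : ℕ) + 1) + catalan ((i : ℕ) + (j : ℕ) + 2) : ℤ)).det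
      = Nat.fib (2 * n + 4) := by
  set L := ballotMatrix (n + 1)
  have hfactor : (Matrix.of fun i j : Fin (n + 1) =>
      (catalan ((i : ℕ) + (j : ℕ) + 1) + catalan ((i : ℕ) + (j : ℕ) + 2) : ℤ)) =
      L * (1 + tridiagMatrix (n + 1) 2 1) * Lᵀ := by
    rw [mul_add, mul_one, ballotMatrix_mul_tridiagMatrix, add_mul]
    ext i j
    simp only [Matrix.add_apply, mul_apply, of_apply, transpose_apply, L, ballotMatrix,
      mul_comm (ballot (i + 1) _)]
    rw [Fin.sum_univ_eq_sum_range (fun k => ballot i k * ballot j k),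
      Fin.sum_univ_eq_sum_range (fun k => ballot j k * ballot (i + 1) k),
      sum_range_ballot_mul_ballot i.isLt, sum_range_ballot_mul_ballot j.isLt,
      show (j : ℕ) + (i + 1) + 1 = i + j + 2 by ring]
  rw [hfactor, det_mul, det_mul, det_transpose, det_ballotMatrix, one_add_tridiagMatrix]
  norm_num [det_tridiagMatrix_three_one, show 2 * (n + 1) + 2 = 2 * n + 4 by ring]
end

section
/- For all n ≥ 0, det((B_{i+j})_{i,j=0}^{n}) = 2^n, where B_n = binom(2n,n). -/
open Finset

private lemma symm_helper (m t : ℕ) :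
    (2*m).choose (m+t) = if t ≤ m then (2*m).choose (m-t) else 0 := by
  split
  · next h =>
    rw [← Nat.choose_symm (by omega : m+t ≤ 2*m)]
    congr 1; omega
  · next h => exact Nat.choose_eq_zero_of_lt (by omega)

private lemma shrink (i j : ℕ) :
    ∑ k ∈ Icc 1 i, (2*i).choose (i-k) * (2*j).choose (j+k)
      = ∑ k ∈ Icc 1 (min i j), (2*i).choose (i-k) * (2*j).choose (j-k) := by
  rw [← Finset.sum_subset (Finset.Icc_subset_Icc_right (min_le_left i j))
      (fun x hx hnx => by
        rw [mem_Icc] at hx; rw [mem_Icc] at hnx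
        rw [symm_helper j x, if_neg (by omega), mul_zero])]
  refine Finset.sum_congr rfl fun k hk => ?_
  rw [mem_Icc] at hk
  rw [symm_helper j k, if_pos (by omega)]

private lemma shrink' (i j : ℕ) :
    ∑ k ∈ Icc 1 j, (2*i).choose (i+k) * (2*j).choose (j-k)
      = ∑ k ∈ Icc 1 (min i j), (2*i).choose (i-k) * (2*j).choose (j-k) := by
  rw [← Finset.sum_subset (Finset.Icc_subset_Icc_right (min_le_right i j))
      (fun x hx hnx => by
        rw [mem_Icc] at hx; rw [mem_Icc] at hnx
        rw [symm_helper i x, if_neg (by omega), zero_mul])]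
  refine Finset.sum_congr rfl fun k hk => ?_
  rw [mem_Icc] at hk
  rw [symm_helper i k, if_pos (by omega)]

private lemma vander (i j : ℕ) :
    Nat.centralBinom (i + j) =
      (2*i).choose i * (2*j).choose j
        + 2 * ∑ k ∈ Icc 1 (min i j), (2*i).choose (i-k) * (2*j).choose (j-k) := by
  have h1 : Nat.centralBinom (i+j)
      = ∑ p ∈ range (i+j+1), (2*i).choose p * (2*j).choose (i+j-p) := by
    rw [Nat.centralBinom, show 2*(i+j) = 2*i + 2*j by ring, Nat.add_choose_eq,
      Finset.Nat.sum_antidiagonal_eq_sum_range_succ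
        (fun a b => (2*i).choose a * (2*j).choose b)]
  have hsplit : ∑ p ∈ range (i+j+1), (2*i).choose p * (2*j).choose (i+j-p)
      = (∑ p ∈ range (i+1), (2*i).choose p * (2*j).choose (i+j-p))
        + ∑ p ∈ Ico (i+1) (i+j+1), (2*i).choose p * (2*j).choose (i+j-p) :=
    (sum_range_add_sum_Ico _ (by omega)).symm
  -- Part A
  have hA : ∑ p ∈ range (i+1), (2*i).choose p * (2*j).choose (i+j-p)
      = (2*i).choose i * (2*j).choose j
        + ∑ k ∈ Icc 1 (min i j), (2*i).choose (i-k) * (2*j).choose (j-k) := by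
    rw [← Finset.sum_range_reflect]
    have e1 : ∀ k ∈ range (i+1),
        (2*i).choose (i+1-1-k) * (2*j).choose (i+j-(i+1-1-k))
          = (2*i).choose (i-k) * (2*j).choose (j+k) := by
      intro k hk
      rw [mem_range] at hk
      congr 2 <;> omega
    rw [Finset.sum_congr rfl e1, Finset.sum_range_succ']
    have e2 : ∑ k ∈ range i, (2*i).choose (i-(k+1)) * (2*j).choose (j+(k+1))
        = ∑ k ∈ Icc 1 i, (2*i).choose (i-k) * (2*j).choose (j+k) := by
      rw [show Icc 1 i = Ico 1 (i+1) by rw [Finset.Ico_add_one_right_eq_Icc],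
        Finset.sum_Ico_eq_sum_range]
      refine Finset.sum_congr (by rw [Nat.add_sub_cancel]) fun k _ => by
        rw [Nat.add_comm 1 k]
    rw [e2, shrink i j, Nat.sub_zero, Nat.add_zero, Nat.add_comm]
  -- Part B
  have hB : ∑ p ∈ Ico (i+1) (i+j+1), (2*i).choose p * (2*j).choose (i+j-p)
      = ∑ k ∈ Icc 1 (min i j), (2*i).choose (i-k) * (2*j).choose (j-k) := by
    rw [Finset.sum_Ico_eq_sum_range]
    have e1 : ∀ k ∈ range (i+j+1-(i+1)),
        (2*i).choose (i+1+k) * (2*j).choose (i+j-(i+1+k))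
          = (2*i).choose (i+(k+1)) * (2*j).choose (j-(k+1)) := by
      intro k hk
      rw [mem_range] at hk
      congr 2 <;> omega
    rw [Finset.sum_congr rfl e1]
    have e2 : ∑ k ∈ range (i+j+1-(i+1)), (2*i).choose (i+(k+1)) * (2*j).choose (j-(k+1))
        = ∑ k ∈ Icc 1 j, (2*i).choose (i+k) * (2*j).choose (j-k) := by
      rw [show Icc 1 j = Ico 1 (j+1) by rw [Finset.Ico_add_one_right_eq_Icc],
        Finset.sum_Ico_eq_sum_range]
      refine Finset.sum_congr (by congr 1; omega) fun k _ => by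
        rw [Nat.add_comm 1 k]
    rw [e2, shrink' i j]
  rw [h1, hsplit, hA, hB]
  ring

private lemma key (n i j : ℕ) (hi : i ≤ n) (hj : j ≤ n) :
    ∑ k ∈ range (n+1),
      (if k ≤ i then (2*i).choose (i-k) else 0) *
        ((if k = 0 then 1 else 2) * (if k ≤ j then (2*j).choose (j-k) else 0))
      = Nat.centralBinom (i+j) := by
  rw [vander]
  rw [Finset.sum_range_eq_add_Ico _ (by omega)]
  congr 1
  · simp
  · rw [show Ico 1 (n+1) = Icc 1 n by rw [Finset.Ico_add_one_right_eq_Icc]]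
    rw [Finset.mul_sum]
    rw [← Finset.sum_subset
        (Finset.Icc_subset_Icc_right (le_trans (min_le_left i j) hi))
        (fun x hx hnx => by
          rw [mem_Icc] at hx; rw [mem_Icc] at hnx
          rcases Nat.lt_or_ge i x with h | h
          · rw [if_neg (show ¬ x ≤ i by omega), zero_mul]
          · rw [if_neg (show ¬ x ≤ j by omega), mul_zero, mul_zero])]
    refine Finset.sum_congr rfl fun k hk => ?_
    rw [mem_Icc] at hk
    rw [if_pos (show k ≤ i by omega), if_pos (show k ≤ j by omega),
      if_neg (show ¬ k = 0 by omega)]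
    ring

theorem hankel_central_binom_det (n : ℕ) :
    (Matrix.of fun i j : Fin (n + 1) =>
      (Nat.centralBinom ((i : ℕ) + (j : ℕ)) : ℤ)).det = 2 ^ n := by
  have hM : (Matrix.of fun i j : Fin (n + 1) =>
      (Nat.centralBinom ((i : ℕ) + (j : ℕ)) : ℤ))
      = (Matrix.of fun i k : Fin (n+1) =>
          if (k:ℕ) ≤ (i:ℕ) then ((2*(i:ℕ)).choose ((i:ℕ)-(k:ℕ)) : ℤ) else 0)
        * Matrix.diagonal (fun k : Fin (n+1) => if (k:ℕ) = 0 then (1:ℤ) else 2)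
        * Matrix.transpose (Matrix.of fun i k : Fin (n+1) =>
            if (k:ℕ) ≤ (i:ℕ) then ((2*(i:ℕ)).choose ((i:ℕ)-(k:ℕ)) : ℤ) else 0) := by
    ext i j
    rw [Matrix.mul_apply]
    simp only [Matrix.mul_diagonal, Matrix.transpose_apply, Matrix.of_apply]
    rw [Fin.sum_univ_eq_sum_range (fun k =>
      (if k ≤ (i:ℕ) then ((2*(i:ℕ)).choose ((i:ℕ)-k) : ℤ) else 0) *
        (if k = 0 then (1:ℤ) else 2) *
        (if k ≤ (j:ℕ) then ((2*(j:ℕ)).choose ((j:ℕ)-k) : ℤ) else 0)) (n+1)]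
    rw [← key n i j (Nat.lt_succ_iff.mp i.isLt) (Nat.lt_succ_iff.mp j.isLt)]
    rw [Nat.cast_sum]
    refine Finset.sum_congr rfl fun k _ => ?_
    push_cast [apply_ite (fun x : ℕ => (x : ℤ))]
    ring
  rw [hM, Matrix.det_mul, Matrix.det_mul, Matrix.det_transpose]
  have hdetA : (Matrix.of fun i k : Fin (n+1) =>
      if (k:ℕ) ≤ (i:ℕ) then ((2*(i:ℕ)).choose ((i:ℕ)-(k:ℕ)) : ℤ) else 0).det = 1 := by
    rw [Matrix.det_of_lowerTriangular _ (fun i j hij => by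
      simp only [Matrix.of_apply]
      rw [if_neg (show ¬ (j:ℕ) ≤ (i:ℕ) by exact_mod_cast Nat.not_le.mpr hij)])]
    refine Finset.prod_eq_one fun i _ => by simp
  have hdetD : (Matrix.diagonal
      (fun k : Fin (n+1) => if (k:ℕ) = 0 then (1:ℤ) else 2)).det = 2 ^ n := by
    rw [Matrix.det_diagonal, Fin.prod_univ_succ]
    simp
  rw [hdetA, hdetD]
  ring
end

section
/- For all n ≥ 0 and 0 ≤ m ≤ n, Σ_{k=0}^{n+1} (-1)^k binom(2n+2-k, k)·C_{n+1+m-k} = 0, where C_j is the Catalan number. -/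
open Finset

private def fsum (N d : ℕ) : ℤ :=
  ∑ k ∈ range (d + 1), (-1 : ℤ) ^ k * ((2 * d - k).choose k : ℤ) * (catalan (N + d - k) : ℤ)

private def bval (N d : ℕ) : ℤ :=
  ((2 * N).choose (N + d) : ℤ) - ((2 * N).choose (N + d + 1) : ℤ)

private lemma choose_central (N : ℕ) : (2 * N).choose N = (N + 1) * catalan N := by
  rw [succ_mul_catalan_eq_centralBinom, Nat.centralBinom_eq_two_mul_choose]

private lemma choose_N1 (N : ℕ) : (2 * N).choose (N + 1) = N * catalan N := by
  have h := Nat.choose_succ_right_eq (2 * N) N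
  have h2 : 2 * N - N = N := by omega
  rw [h2, choose_central] at h
  have : (2 * N).choose (N + 1) * (N + 1) = N * catalan N * (N + 1) := by
    rw [h]; ring
  exact Nat.eq_of_mul_eq_mul_right (Nat.succ_pos N) this

private lemma choose_N2 (N : ℕ) :
    (2 * N).choose (N + 2) * (N + 2) = N * catalan N * (N - 1) := by
  have h := Nat.choose_succ_right_eq (2 * N) (N + 1)
  have h2 : 2 * N - (N + 1) = N - 1 := by omega
  rw [h2, choose_N1] at h
  exact h

private lemma cat_succ (N : ℕ) : (N + 2) * catalan (N + 1) = (4 * N + 2) * catalan N := by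
  have h := Nat.succ_mul_centralBinom_succ N
  rw [← succ_mul_catalan_eq_centralBinom, ← succ_mul_catalan_eq_centralBinom] at h
  have h' : (N + 1) * ((N + 2) * catalan (N + 1)) = (N + 1) * ((4 * N + 2) * catalan N) := by
    linarith [h]
  exact Nat.eq_of_mul_eq_mul_left (Nat.succ_pos N) h'

private lemma base0 (N : ℕ) : fsum N 0 = bval N 0 := by
  simp only [fsum, bval]
  rw [Finset.sum_range_one]
  simp only [pow_zero, Nat.mul_zero, Nat.sub_zero, Nat.add_zero, Nat.choose_zero_right,
    Nat.cast_one, one_mul, Nat.choose_self]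
  rw [choose_central, choose_N1]
  push_cast
  ring

private lemma base1 (N : ℕ) : fsum N 1 = bval N 1 := by
  have hf : fsum N 1 = (catalan (N + 1) : ℤ) - catalan N := by
    simp [fsum, Finset.sum_range_succ]
    ring
  rw [hf]
  have hb : bval N 1 = (N : ℤ) * catalan N - (2 * N).choose (N + 2) := by
    simp only [bval]
    rw [choose_N1]
    push_cast
    ring
  rw [hb]
  rcases N with _ | M
  · norm_num
  · -- N = M + 1
    have hc : ((2 * (M + 1)).choose (M + 1 + 2) : ℤ) * ((M : ℤ) + 3) =
        ((M : ℤ) + 1) * catalan (M + 1) * M := by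
      have := choose_N2 (M + 1)
      have h2 : (M + 1 : ℕ) - 1 = M := by omega
      rw [h2] at this
      exact_mod_cast congrArg (Nat.cast : ℕ → ℤ) this
    have hcat : ((M : ℤ) + 3) * catalan (M + 2) = (4 * M + 6) * catalan (M + 1) := by
      exact_mod_cast congrArg (Nat.cast : ℕ → ℤ) (cat_succ (M + 1))
    have h3 : ((M : ℤ) + 3) ≠ 0 := by positivity
    apply mul_left_cancel₀ h3
    push_cast at hcat hc ⊢
    nlinarith [hcat, hc]

private lemma choose_key (a i : ℕ) :
    ((a + 2).choose (i + 2) : ℤ) + (a.choose i : ℤ)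
      = (a.choose (i + 2) : ℤ) + 2 * ((a + 1).choose (i + 1) : ℤ) := by
  have h1 : (a + 2).choose (i + 2) = (a + 1).choose (i + 1) + (a + 1).choose (i + 2) :=
    Nat.choose_succ_succ _ _
  have h2 : (a + 1).choose (i + 1) = a.choose i + a.choose (i + 1) := Nat.choose_succ_succ _ _
  have h3 : (a + 1).choose (i + 2) = a.choose (i + 1) + a.choose (i + 2) :=
    Nat.choose_succ_succ _ _
  push_cast [h1, h2, h3]
  ring

private lemma f_rec (N d : ℕ) :
    fsum N (d + 2) = fsum (N + 1) (d + 1) - 2 * fsum N (d + 1) - fsum N d := by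
  have hA : fsum N (d + 2) =
      (∑ i ∈ range (d + 1),
        (-1 : ℤ) ^ i * (((2 * d - i) + 2).choose (i + 2) : ℤ) * (catalan (N + d - i) : ℤ))
      + (-(2 * (d : ℤ) + 3) * catalan (N + d + 1) + catalan (N + d + 2)) := by
    show (∑ k ∈ range (d + 2 + 1), (-1 : ℤ) ^ k * ((2 * (d + 2) - k).choose k : ℤ)
        * (catalan (N + (d + 2) - k) : ℤ)) = _
    rw [Finset.sum_range_succ' _ (d + 2), Finset.sum_range_succ' _ (d + 1)]
    have hlast : ∀ i ∈ range (d + 1),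
        (-1 : ℤ) ^ (i + 1 + 1) * ((2 * (d + 2) - (i + 1 + 1)).choose (i + 1 + 1) : ℤ)
          * (catalan (N + (d + 2) - (i + 1 + 1)) : ℤ)
        = (-1 : ℤ) ^ i * (((2 * d - i) + 2).choose (i + 2) : ℤ) * (catalan (N + d - i) : ℤ) := by
      intro i hi
      simp only [Finset.mem_range] at hi
      have e1 : 2 * (d + 2) - (i + 1 + 1) = (2 * d - i) + 2 := by omega
      have e2 : N + (d + 2) - (i + 1 + 1) = N + d - i := by omega
      rw [e1, e2, pow_add]
      ring
    rw [Finset.sum_congr rfl hlast]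
    have e3 : 2 * (d + 2) - (0 + 1) = 2 * d + 3 := by omega
    have e4 : N + (d + 2) - (0 + 1) = N + d + 1 := by omega
    have e5 : 2 * (d + 2) - 0 = 2 * (d + 2) := by omega
    have e6 : N + (d + 2) - 0 = N + d + 2 := by omega
    rw [e3, e4, e5, e6]
    simp [Nat.choose_one_right]
    ring
  have hB : fsum (N + 1) (d + 1) =
      (∑ i ∈ range (d + 1),
        (-1 : ℤ) ^ i * ((2 * d - i).choose (i + 2) : ℤ) * (catalan (N + d - i) : ℤ))
      + (-(2 * (d : ℤ) + 1) * catalan (N + d + 1) + catalan (N + d + 2)) := by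
    have hext : fsum (N + 1) (d + 1) = ∑ k ∈ range (d + 2 + 1),
        (-1 : ℤ) ^ k * ((2 * (d + 1) - k).choose k : ℤ)
          * (catalan ((N + 1) + (d + 1) - k) : ℤ) := by
      show (∑ k ∈ range (d + 1 + 1), _) = _
      rw [Finset.sum_range_succ _ (d + 2)]
      have hz : (2 * (d + 1) - (d + 2)).choose (d + 2) = 0 := by
        apply Nat.choose_eq_zero_of_lt
        omega
      rw [hz]
      push_cast
      ring
    rw [hext, Finset.sum_range_succ' _ (d + 2), Finset.sum_range_succ' _ (d + 1)]
    have hlast : ∀ i ∈ range (d + 1),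
        (-1 : ℤ) ^ (i + 1 + 1) * ((2 * (d + 1) - (i + 1 + 1)).choose (i + 1 + 1) : ℤ)
          * (catalan ((N + 1) + (d + 1) - (i + 1 + 1)) : ℤ)
        = (-1 : ℤ) ^ i * ((2 * d - i).choose (i + 2) : ℤ) * (catalan (N + d - i) : ℤ) := by
      intro i hi
      simp only [Finset.mem_range] at hi
      have e1 : 2 * (d + 1) - (i + 1 + 1) = 2 * d - i := by omega
      have e2 : (N + 1) + (d + 1) - (i + 1 + 1) = N + d - i := by omega
      rw [e1, e2, pow_add]
      ring
    rw [Finset.sum_congr rfl hlast]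
    have e3 : 2 * (d + 1) - (0 + 1) = 2 * d + 1 := by omega
    have e4 : (N + 1) + (d + 1) - (0 + 1) = N + d + 1 := by omega
    have e5 : 2 * (d + 1) - 0 = 2 * (d + 1) := by omega
    have e6 : (N + 1) + (d + 1) - 0 = N + d + 2 := by omega
    rw [e3, e4, e5, e6]
    simp [Nat.choose_one_right]
    ring
  have hg : fsum N (d + 1) =
      (∑ i ∈ range (d + 1),
        (-1 : ℤ) ^ i * (-1) * (((2 * d - i) + 1).choose (i + 1) : ℤ)
          * (catalan (N + d - i) : ℤ))
      + (catalan (N + d + 1) : ℤ) := by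
    show (∑ k ∈ range (d + 1 + 1), _) = _
    rw [Finset.sum_range_succ' _ (d + 1)]
    have hlast : ∀ i ∈ range (d + 1),
        (-1 : ℤ) ^ (i + 1) * ((2 * (d + 1) - (i + 1)).choose (i + 1) : ℤ)
          * (catalan (N + (d + 1) - (i + 1)) : ℤ)
        = (-1 : ℤ) ^ i * (-1) * (((2 * d - i) + 1).choose (i + 1) : ℤ)
          * (catalan (N + d - i) : ℤ) := by
      intro i hi
      simp only [Finset.mem_range] at hi
      have e1 : 2 * (d + 1) - (i + 1) = (2 * d - i) + 1 := by omega
      have e2 : N + (d + 1) - (i + 1) = N + d - i := by omega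
      rw [e1, e2, pow_add]
      ring
    rw [Finset.sum_congr rfl hlast]
    have e5 : 2 * (d + 1) - 0 = 2 * (d + 1) := by omega
    have e6 : N + (d + 1) - 0 = N + d + 1 := by omega
    rw [e5, e6]
    simp
  have hh : fsum N d = ∑ i ∈ range (d + 1),
      (-1 : ℤ) ^ i * ((2 * d - i).choose i : ℤ) * (catalan (N + d - i) : ℤ) := rfl
  rw [hA, hB, hg, hh]
  have hpt : ∀ i ∈ range (d + 1),
      (-1 : ℤ) ^ i * (((2 * d - i) + 2).choose (i + 2) : ℤ) * (catalan (N + d - i) : ℤ)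
      = ((-1 : ℤ) ^ i * ((2 * d - i).choose (i + 2) : ℤ) * (catalan (N + d - i) : ℤ)
          - 2 * ((-1 : ℤ) ^ i * (-1) * (((2 * d - i) + 1).choose (i + 1) : ℤ)
              * (catalan (N + d - i) : ℤ)))
        - (-1 : ℤ) ^ i * ((2 * d - i).choose i : ℤ) * (catalan (N + d - i) : ℤ) := by
    intro i hi
    have hk := choose_key (2 * d - i) i
    linear_combination ((-1 : ℤ) ^ i * (catalan (N + d - i) : ℤ)) * hk
  rw [Finset.sum_congr rfl hpt, Finset.sum_sub_distrib, Finset.sum_sub_distrib,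
    ← Finset.mul_sum]
  ring

private lemma b_rec (N d : ℕ) :
    bval N (d + 2) = bval (N + 1) (d + 1) - 2 * bval N (d + 1) - bval N d := by
  simp only [bval]
  have e1 : 2 * (N + 1) = (2 * N) + 1 + 1 := by ring
  have p1 : ((2 * N) + 1 + 1).choose ((N + 1) + (d + 1)) = (2 * N + 1).choose (N + d + 1)
      + (2 * N + 1).choose (N + d + 2) := by
    have := Nat.choose_succ_succ (2 * N + 1) (N + d + 1)
    simpa [show (N + 1) + (d + 1) = N + d + 1 + 1 by omega] using this
  have p2 : ((2 * N) + 1 + 1).choose ((N + 1) + (d + 1) + 1) = (2 * N + 1).choose (N + d + 2)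
      + (2 * N + 1).choose (N + d + 3) := by
    have := Nat.choose_succ_succ (2 * N + 1) (N + d + 2)
    simpa [show (N + 1) + (d + 1) + 1 = N + d + 2 + 1 by omega] using this
  have q1 : (2 * N + 1).choose (N + d + 1) = (2 * N).choose (N + d) + (2*N).choose (N + d + 1) :=
    Nat.choose_succ_succ _ _
  have q2 : (2 * N + 1).choose (N + d + 2) =
      (2 * N).choose (N + d + 1) + (2 * N).choose (N + d + 2) := Nat.choose_succ_succ _ _
  have q3 : (2 * N + 1).choose (N + d + 3) =
      (2 * N).choose (N + d + 2) + (2 * N).choose (N + d + 3) := Nat.choose_succ_succ _ _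
  rw [e1, p1, p2, q1, q2, q3]
  have e2 : N + (d + 2) = N + d + 2 := by omega
  have e3 : N + (d + 1) = N + d + 1 := by omega
  rw [e2, e3]
  push_cast
  ring

private lemma main_lemma : ∀ d N, fsum N d = bval N d := by
  intro d
  induction d using Nat.strong_induction_on with
  | _ d ih =>
    match d with
    | 0 => exact base0
    | 1 => exact base1
    | (e + 2) =>
      intro N
      rw [f_rec, b_rec, ih (e + 1) (by omega), ih (e + 1) (by omega), ih e (by omega)]

theorem catalan_moment_even_orthogonality (n m : ℕ) (hm : m ≤ n) :
    ∑ k ∈ range (n + 2), (-1 : ℤ) ^ k * ((2 * n + 2 - k).choose k) * catalan (n + 1 + m - k)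
      = 0 := by
  have h1 : ∑ k ∈ range (n + 2), (-1 : ℤ) ^ k * ((2 * n + 2 - k).choose k)
      * catalan (n + 1 + m - k) = fsum m (n + 1) := by
    show _ = ∑ k ∈ range (n + 1 + 1), _
    apply Finset.sum_congr (by norm_num)
    intro k hk
    simp only [Finset.mem_range] at hk
    have e1 : 2 * n + 2 - k = 2 * (n + 1) - k := by omega
    have e2 : n + 1 + m - k = m + (n + 1) - k := by omega
    rw [e1, e2]
  rw [h1, main_lemma]
  simp only [bval]
  rw [Nat.choose_eq_zero_of_lt (by omega), Nat.choose_eq_zero_of_lt (by omega)]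
  simp
end

section
/- Let r(n,x) = C_{n+1}·x − C_{n+2}. Then det((r(i+j, x²))_{i,j=0}^{n}) = F_{2n+4}(x, −1)/x, i.e., x·det((r(i+j,x²))_{i,j=0}^{n}) = F_{2n+4}(x,−1) as polynomials. -/
/-!
Let `J` be the Jacobi matrix `tridiag(1, 2, 1)` and `b m = Jᵐ e₀` the rows of the Catalan triangle,
so that `b m 0 = C (m + 1)`. Since `J` is symmetric, `⟨b i, b j⟩ = ⟨e₀, J^(i+j) e₀⟩ = C (i + j + 1)`:
the lower unitriangular matrix `B` of these rows satisfies `B Bᵀ = (C (i + j + 1))` and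
`B J Bᵀ = (C (i + j + 2))`. Hence `(C (i + j + 1) x - C (i + j + 2)) = B (x - J) Bᵀ` has the
continuant `det (x - J)` as determinant, which obeys `D (n + 2) = (x - 2) D (n + 1) - D n`.
For `x = X²` this is the recurrence `F (k + 4) = (X² - 2) F (k + 2) - F k` of the even-index
Fibonacci polynomials.
-/

open Polynomial Finset Matrix

section Tridiagonal

variable {R : Type*}

def tridiagEntry [Zero R] (a b c : R) (i j : ℕ) : R :=
  if i = j then a else if j = i + 1 then b else if i = j + 1 then c else 0

theorem tridiagEntry_comm [Zero R] (a b : R) (i j : ℕ) :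
    tridiagEntry a b b i j = tridiagEntry a b b j i := by
  unfold tridiagEntry
  split_ifs <;> first | rfl | omega

theorem tridiagEntry_eq_zero [Zero R] (a b c : R) {i j : ℕ} (h : i + 2 ≤ j ∨ j + 2 ≤ i) :
    tridiagEntry a b c i j = 0 := by
  unfold tridiagEntry
  split_ifs <;> first | rfl | omega

theorem tridiagEntry_succ_succ [Zero R] (a b c : R) (i j : ℕ) :
    tridiagEntry a b c (i + 1) (j + 1) = tridiagEntry a b c i j := by
  simp [tridiagEntry]

theorem Nat.cast_tridiagEntry [AddMonoidWithOne R] (a b c i j : ℕ) :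
    ((tridiagEntry a b c i j : ℕ) : R) = tridiagEntry (a : R) b c i j := by
  unfold tridiagEntry
  split_ifs <;> simp

def tridiagonal [Zero R] (n : ℕ) (a b c : R) : Matrix (Fin n) (Fin n) R :=
  Matrix.of fun i j => tridiagEntry a b c i j

theorem tridiagonal_submatrix_succ [Zero R] (n : ℕ) (a b c : R) :
    (tridiagonal (n + 1) a b c).submatrix Fin.succ Fin.succ = tridiagonal n a b c := by
  ext i j
  simp [tridiagonal, tridiagEntry_succ_succ]

theorem det_tridiagonal_succ_succ [CommRing R] (n : ℕ) (a b c : R) :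
    (tridiagonal (n + 2) a b c).det =
      a * (tridiagonal (n + 1) a b c).det - b * c * (tridiagonal n a b c).det := by
  set A := tridiagonal (n + 2) a b c
  have minor : (A.submatrix Fin.succ (Fin.succAbove 1)).det = c * (tridiagonal n a b c).det := by
    rw [det_succ_column_zero, Fin.sum_univ_succ, sum_eq_zero fun i _ => ?_]
    · have hc : A 1 0 = c := by simp [A, tridiagonal, tridiagEntry]
      have hminor : (A.submatrix Fin.succ (Fin.succAbove 1)).submatrix (Fin.succAbove 0) Fin.succ
          = tridiagonal n a b c := by
        ext i j
        simp [A, tridiagonal, tridiagEntry_succ_succ]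
      rw [hminor]
      simp [hc]
    · simp [A, tridiagonal, tridiagEntry_eq_zero]
  have ha : A 0 0 = a := by simp [A, tridiagonal, tridiagEntry]
  have hb : A 0 1 = b := by simp [A, tridiagonal, tridiagEntry]
  rw [det_succ_row_zero, Fin.sum_univ_succ, Fin.sum_univ_succ, sum_eq_zero fun j _ => ?_]
  · simp [minor, ha, hb, A, tridiagonal_submatrix_succ]
    ring
  · simp [A, tridiagonal, tridiagEntry_eq_zero]

theorem mul_det_tridiagonal_sq_sub_two [CommRing R] (x : R) (F : ℕ → R) (hF0 : F 0 = 0)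
    (hF1 : F 1 = 1) (hF : ∀ m, F (m + 2) = x * F (m + 1) - F m) (m : ℕ) :
    x * (tridiagonal m (x ^ 2 - 2) (-1) (-1)).det = F (2 * m + 2) := by
  have bisect (k : ℕ) : F (k + 4) = (x ^ 2 - 2) * F (k + 2) - F k := by
    linear_combination hF (k + 2) + x * hF (k + 1) + hF k
  induction m using Nat.twoStepInduction with
  | zero => simp [hF, hF0, hF1]
  | one =>
    simp [tridiagonal, tridiagEntry, bisect, hF, hF0, hF1]
    ring
  | more m ih₀ ih₁ =>
    rw [det_tridiagonal_succ_succ, show 2 * (m + 2) + 2 = 2 * m + 2 + 4 by ring, bisect,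
      show 2 * m + 2 + 2 = 2 * (m + 1) + 2 by ring, ← ih₀, ← ih₁]
    ring

end Tridiagonal

/-- Shapiro's Catalan triangle shifted by one,
`catalanTriangle m k = (k + 1) / (m + 1) * choose (2 * m + 2) (m - k)`: the number of paths of
length `m` from height `0` to height `k`, staying weakly above `0`, with up steps, down steps and
two kinds of level steps. -/
def catalanTriangle : ℕ → ℕ → ℕ
  | 0, 0 => 1
  | 0, _ + 1 => 0
  | m + 1, 0 => 2 * catalanTriangle m 0 + catalanTriangle m 1
  | m + 1, k + 1 =>
    catalanTriangle m k + 2 * catalanTriangle m (k + 1) + catalanTriangle m (k + 2)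

theorem catalanTriangle_eq_zero_of_lt {m k : ℕ} (h : m < k) : catalanTriangle m k = 0 := by
  induction m generalizing k with
  | zero => obtain ⟨k, rfl⟩ := Nat.exists_eq_succ_of_ne_zero h.ne'; rfl
  | succ m ih =>
    obtain ⟨k, rfl⟩ := Nat.exists_eq_succ_of_ne_zero (by omega : k ≠ 0)
    simp [catalanTriangle, ih (by omega : m < k), ih (by omega : m < k + 1),
      ih (by omega : m < k + 2)]

theorem catalanTriangle_self (m : ℕ) : catalanTriangle m m = 1 := by
  induction m with
  | zero => rfl
  | succ m ih => simp [catalanTriangle, ih, catalanTriangle_eq_zero_of_lt]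

/-- Split a path at its last visit to height `0`. -/
theorem catalanTriangle_succ_succ_eq_sum (m k : ℕ) :
    catalanTriangle (m + 1) (k + 1) =
      ∑ p ∈ antidiagonal m, catalanTriangle p.1 0 * catalanTriangle p.2 k := by
  induction m generalizing k with
  | zero => simp [catalanTriangle]
  | succ m ih =>
    rw [Nat.sum_antidiagonal_succ']
    cases k with
    | zero =>
      rw [catalanTriangle.eq_4, ih 0, ih 1]
      simp only [catalanTriangle.eq_1, catalanTriangle.eq_3, mul_add, sum_add_distrib,
        mul_left_comm _ 2, ← mul_sum]
      ring
    | succ k =>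
      rw [catalanTriangle.eq_4, ih k, ih (k + 1), ih (k + 2), catalanTriangle.eq_2]
      simp only [catalanTriangle.eq_4, mul_add, sum_add_distrib, mul_left_comm _ 2, ← mul_sum]
      ring

theorem catalanTriangle_zero_right (m : ℕ) : catalanTriangle m 0 = catalan (m + 1) := by
  induction m using Nat.strong_induction_on with
  | _ m ih =>
  match m with
  | 0 => simp [catalanTriangle]
  | 1 => simp [catalanTriangle, catalan_two]
  | m + 2 =>
    rw [catalanTriangle, catalanTriangle_succ_succ_eq_sum, catalan_succ' (m + 2),
      Nat.sum_antidiagonal_succ, Nat.sum_antidiagonal_succ', ih (m + 1) (by omega)]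
    simp only [catalan_zero]
    rw [sum_congr rfl fun p hp => by
      rw [ih p.1 (by simp at hp; omega), ih p.2 (by simp at hp; omega)]]
    ring

theorem sum_range_mul_catalanTriangle_of_lt (f : ℕ → ℕ) {m N : ℕ} (h : m < N) :
    ∑ k ∈ range N, f k * catalanTriangle m k =
      ∑ k ∈ range (m + 1), f k * catalanTriangle m k :=
  (sum_subset (range_subset_range.2 h) fun k _ hk => by
    rw [catalanTriangle_eq_zero_of_lt (by simpa using hk), mul_zero]).symm

theorem sum_range_add_two_tridiagEntry_mul_catalanTriangle (m k : ℕ) :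
    ∑ l ∈ range (k + 2), tridiagEntry 2 1 1 k l * catalanTriangle m l =
      catalanTriangle (m + 1) k := by
  cases k with
  | zero => simp [sum_range_succ, tridiagEntry, catalanTriangle]
  | succ k =>
    rw [sum_range_succ, sum_range_succ, sum_range_succ,
      sum_eq_zero fun l hl => by rw [tridiagEntry_eq_zero _ _ _ (by simp at hl; omega), zero_mul]]
    simp [tridiagEntry, catalanTriangle]

theorem sum_range_tridiagEntry_mul_catalanTriangle {m k N : ℕ} (hm : m < N) (hk : k < N) :
    ∑ l ∈ range N, tridiagEntry 2 1 1 k l * catalanTriangle m l = catalanTriangle (m + 1) k :=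
  calc _ = ∑ l ∈ range (N + 1), tridiagEntry 2 1 1 k l * catalanTriangle m l := by
        rw [sum_range_mul_catalanTriangle_of_lt _ hm,
          sum_range_mul_catalanTriangle_of_lt _ (hm.trans N.lt_succ_self)]
    _ = ∑ l ∈ range (k + 2), tridiagEntry 2 1 1 k l * catalanTriangle m l :=
        (sum_subset (range_subset_range.2 (by omega)) fun l _ hl => by
          rw [tridiagEntry_eq_zero _ _ _ (by simp at hl; omega), zero_mul]).symm
    _ = _ := sum_range_add_two_tridiagEntry_mul_catalanTriangle m k

theorem sum_range_catalanTriangle_mul_of_add_lt {i j N : ℕ} (h : i + j < N) :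
    ∑ k ∈ range N, catalanTriangle i k * catalanTriangle j k = catalan (i + j + 1) := by
  induction i generalizing j with
  | zero =>
    rw [sum_eq_single 0 (fun k _ hk => by
      rw [catalanTriangle_eq_zero_of_lt (Nat.pos_of_ne_zero hk), zero_mul]) (by simp; omega)]
    simp [catalanTriangle_zero_right]
  | succ i ih =>
    calc _ = ∑ k ∈ range N, (∑ l ∈ range N, tridiagEntry 2 1 1 k l * catalanTriangle i l) *
          catalanTriangle j k :=
          sum_congr rfl fun k hk => by
            rw [sum_range_tridiagEntry_mul_catalanTriangle (by omega) (by simpa using hk)]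
      _ = ∑ l ∈ range N, catalanTriangle i l *
          ∑ k ∈ range N, tridiagEntry 2 1 1 l k * catalanTriangle j k := by
          simp only [sum_mul, mul_sum]
          rw [sum_comm]
          refine sum_congr rfl fun l _ => sum_congr rfl fun k _ => ?_
          rw [tridiagEntry_comm]
          ring
      _ = ∑ l ∈ range N, catalanTriangle i l * catalanTriangle (j + 1) l :=
          sum_congr rfl fun l hl => by
            rw [sum_range_tridiagEntry_mul_catalanTriangle (by omega) (by simpa using hl)]
      _ = catalan (i + 1 + j + 1) := by rw [ih (by omega)]; ring_nf

theorem sum_range_catalanTriangle_mul {i j N : ℕ} (h : j < N) :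
    ∑ k ∈ range N, catalanTriangle i k * catalanTriangle j k = catalan (i + j + 1) := by
  rw [sum_range_mul_catalanTriangle_of_lt _ h,
    ← sum_range_mul_catalanTriangle_of_lt _ (by omega : j < i + j + 1)]
  exact sum_range_catalanTriangle_mul_of_add_lt (by omega)

section HankelFactorization

variable {R : Type*} [CommRing R] (n : ℕ)

def catalanTriangleMatrix : Matrix (Fin n) (Fin n) R :=
  Matrix.of fun i k => (catalanTriangle i k : R)

theorem det_catalanTriangleMatrix :
    (catalanTriangleMatrix n : Matrix (Fin n) (Fin n) R).det = 1 := by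
  rw [det_of_isLowerTriangular _ fun i k (h : i < k) => by
    simp [catalanTriangleMatrix, catalanTriangle_eq_zero_of_lt (Fin.lt_def.1 h)]]
  simp [catalanTriangleMatrix, catalanTriangle_self]

theorem catalanTriangleMatrix_mul_transpose :
    catalanTriangleMatrix n * (catalanTriangleMatrix n)ᵀ =
      Matrix.of fun i j : Fin n => (catalan (i + j + 1) : R) := by
  ext i j
  simp only [Matrix.mul_apply, catalanTriangleMatrix, Matrix.transpose_apply, Matrix.of_apply]
  rw [Fin.sum_univ_eq_sum_range (fun k => (catalanTriangle i k : R) * catalanTriangle j k)]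
  exact_mod_cast congrArg (Nat.cast (R := R)) (sum_range_catalanTriangle_mul (i := i) j.isLt)

theorem catalanTriangleMatrix_mul_tridiagonal :
    catalanTriangleMatrix n * tridiagonal n 2 1 1 =
      Matrix.of fun i k : Fin n => (catalanTriangle (i + 1) k : R) := by
  ext i k
  simp only [Matrix.mul_apply, catalanTriangleMatrix, tridiagonal, Matrix.of_apply]
  rw [Fin.sum_univ_eq_sum_range (fun l => (catalanTriangle i l : R) * tridiagEntry 2 1 1 l k)]
  have h := congrArg (Nat.cast (R := R)) (sum_range_tridiagEntry_mul_catalanTriangle i.isLt k.isLt)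
  push_cast [Nat.cast_tridiagEntry, tridiagEntry_comm] at h
  rw [← h]
  simp [mul_comm]

theorem catalanTriangleMatrix_mul_tridiagonal_mul_transpose :
    catalanTriangleMatrix n * tridiagonal n 2 1 1 * (catalanTriangleMatrix n)ᵀ =
      Matrix.of fun i j : Fin n => (catalan (i + j + 2) : R) := by
  ext i j
  rw [catalanTriangleMatrix_mul_tridiagonal]
  simp only [Matrix.mul_apply, catalanTriangleMatrix, Matrix.transpose_apply, Matrix.of_apply]
  rw [Fin.sum_univ_eq_sum_range (fun k => (catalanTriangle (i + 1) k : R) * catalanTriangle j k)]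
  have h := sum_range_catalanTriangle_mul (i := i + 1) j.isLt
  rw [add_right_comm _ 1, add_assoc] at h
  exact_mod_cast congrArg (Nat.cast (R := R)) h

theorem smul_one_sub_tridiagonal (x : R) :
    x • (1 : Matrix (Fin n) (Fin n) R) - tridiagonal n 2 1 1 =
      tridiagonal n (x - 2) (-1) (-1) := by
  ext i j
  simp only [tridiagonal, tridiagEntry, Matrix.sub_apply, Matrix.smul_apply, Matrix.one_apply,
    Matrix.of_apply, Fin.ext_iff]
  split_ifs <;> simp

theorem hankel_catalan_mul_sub_eq (x : R) :
    (Matrix.of fun i j : Fin n => (catalan (i + j + 1) : R) * x - catalan (i + j + 2)) =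
      catalanTriangleMatrix n * tridiagonal n (x - 2) (-1) (-1) * (catalanTriangleMatrix n)ᵀ := by
  rw [← smul_one_sub_tridiagonal, Matrix.mul_sub, Matrix.sub_mul, Matrix.mul_smul, Matrix.mul_one,
    Matrix.smul_mul, catalanTriangleMatrix_mul_transpose,
    catalanTriangleMatrix_mul_tridiagonal_mul_transpose]
  ext i j
  simp [mul_comm]

theorem det_hankel_catalan_mul_sub (x : R) :
    (Matrix.of fun i j : Fin n => (catalan (i + j + 1) : R) * x - catalan (i + j + 2)).det =
      (tridiagonal n (x - 2) (-1) (-1)).det := by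
  rw [hankel_catalan_mul_sub_eq, det_mul, det_mul, det_transpose, det_catalanTriangleMatrix,
    one_mul, mul_one]

end HankelFactorization

theorem shifted_catalan_linear_hankel_det_fib_poly (n : ℕ)
    (F : ℕ → Polynomial ℚ)
    (hF0 : F 0 = 0) (hF1 : F 1 = 1)
    (hF : ∀ m, F (m + 2) = X * F (m + 1) - F m) :
    X * (Matrix.of fun i j : Fin (n + 1) =>
        Polynomial.C (catalan ((i : ℕ) + (j : ℕ) + 1) : ℚ) * X ^ 2
          - Polynomial.C (catalan ((i : ℕ) + (j : ℕ) + 2) : ℚ)).det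
      = F (2 * n + 4) := by
  simp only [map_natCast]
  rw [det_hankel_catalan_mul_sub, mul_det_tridiagonal_sq_sub_two X F hF0 hF1 hF]
  rfl
end

section
/- Let H_n(x) be the (probabilists') Hermite polynomials defined by H_0=1, H_1=x, H_n(x) = x·H_{n-1}(x) − (n−1)·H_{n-2}(x), and let a(n) = (2n−1)!! (with a(0)=1). Then det((a(i+j)·(x² − (2(i+j)+1)))_{i,j=0}^{n}) / det((a(i+j))_{i,j=0}^{n}) = H_{2n+2}(x). -/
open Polynomial Finset


/-- moments of the standard Gaussian -/
noncomputable def mmu (m : ℕ) : ℚ :=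
  if m % 2 = 0 then ∏ k ∈ range (m / 2), ((2 * k + 1 : ℕ) : ℚ) else 0

lemma mmu_zero : mmu 0 = 1 := by simp [mmu]

lemma mmu_one : mmu 1 = 0 := by simp [mmu]

lemma mmu_rec (n : ℕ) : mmu (n + 1) = (n : ℚ) * mmu (n - 1) := by
  rcases Nat.even_or_odd n with he | ho
  · obtain ⟨k, rfl⟩ := he
    have h1 : (k + k + 1) % 2 = 1 := by omega
    have h2 : (k + k - 1) % 2 = (if k = 0 then 0 else 1) := by split <;> omega
    rcases Nat.eq_zero_or_pos k with rfl | hk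
    · simp [mmu]
    · simp only [mmu, h1, h2, if_neg (by omega : ¬ k = 0)]
      norm_num
  · obtain ⟨k, rfl⟩ := ho
    have h1 : (2 * k + 1 + 1) % 2 = 0 := by omega
    have h2 : (2 * k + 1 - 1) % 2 = 0 := by omega
    have h3 : (2 * k + 1 + 1) / 2 = k + 1 := by omega
    have h4 : (2 * k + 1 - 1) / 2 = k := by omega
    simp only [mmu, h1, h2, h3, h4, if_pos rfl]
    rw [Finset.prod_range_succ]
    push_cast
    ring

lemma mmu_even (i : ℕ) : mmu (2 * i) = ∏ k ∈ range i, ((2 * k + 1 : ℕ) : ℚ) := by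
  simp [mmu, Nat.mul_div_cancel_left]

/-- the Gaussian expectation functional -/
noncomputable def LL : Polynomial ℚ →ₗ[ℚ] ℚ where
  toFun p := p.sum fun m c => c * mmu m
  map_add' p q := Polynomial.sum_add_index p q _ (fun _ => by simp) (fun _ _ _ => by ring)
  map_smul' r p := by
    simp only [RingHom.id_apply, smul_eq_mul]
    rw [Polynomial.sum_smul_index _ _ _ (fun i => by simp), Polynomial.sum_def,
      Polynomial.sum_def, Finset.mul_sum]
    exact Finset.sum_congr rfl fun m _ => by ring

lemma LL_monomial (m : ℕ) (c : ℚ) : LL (monomial m c) = c * mmu m := by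
  simp [LL, Polynomial.sum_monomial_index]

lemma LL_C_mul_X_pow (c : ℚ) (m : ℕ) : LL (C c * X ^ m) = c * mmu m := by
  rw [C_mul_X_pow_eq_monomial, LL_monomial]

lemma LL_one : LL 1 = 1 := by
  have := LL_C_mul_X_pow 1 0
  simpa [mmu_zero] using this

lemma LL_X : LL X = 0 := by
  have := LL_C_mul_X_pow 1 1
  simpa [mmu_one] using this

/-- Stein's identity -/
lemma LL_stein (p : Polynomial ℚ) : LL (X * p) = LL (derivative p) := by
  induction p using Polynomial.induction_on' with
  | add p q hp hq => rw [mul_add, map_add, map_add, hp, hq, map_add]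
  | monomial m c =>
      rw [derivative_monomial, LL_monomial, X_mul_monomial, LL_monomial, mmu_rec]
      ring
section Hermite
variable (H : ℕ → Polynomial ℚ)
    (hH0 : H 0 = 1) (hH1 : H 1 = X)
    (hH : ∀ m, H (m + 2) = X * H (m + 1) - Polynomial.C ((m + 1 : ℕ) : ℚ) * H m)

include hH0 hH1 hH

lemma H_natDegree_le : ∀ m, (H m).natDegree ≤ m := by
  intro m
  induction m using Nat.twoStepInduction with
  | zero => rw [hH0]; simp
  | one => rw [hH1]; simp
  | more m ih1 ih2 =>
      rw [hH m]
      refine le_trans (natDegree_sub_le _ _) (max_le ?_ ?_)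
      · refine le_trans natDegree_mul_le ?_
        have := natDegree_X_le (R := ℚ)
        omega
      · exact le_trans (natDegree_C_mul_le _ _) (by omega)

lemma H_coeff_self : ∀ m, (H m).coeff m = 1 := by
  intro m
  induction m using Nat.twoStepInduction with
  | zero => rw [hH0]; simp
  | one => rw [hH1]; simp
  | more m ih1 ih2 =>
      rw [hH m]
      have h1 : (H m).coeff (m + 2) = 0 :=
        coeff_eq_zero_of_natDegree_lt (lt_of_le_of_lt (H_natDegree_le H hH0 hH1 hH m) (by omega))
      rw [coeff_sub, coeff_X_mul, ih2, coeff_C_mul, h1, mul_zero, sub_zero]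

lemma H_ne_zero (m : ℕ) : H m ≠ 0 := fun h => by
  have := H_coeff_self H hH0 hH1 hH m
  rw [h] at this; simp at this

lemma H_coeff_parity : ∀ m j, (m + j) % 2 = 1 → (H m).coeff j = 0 := by
  intro m
  induction m using Nat.twoStepInduction with
  | zero => intro j hj; rw [hH0]; rw [coeff_one]; simp; omega
  | one => intro j hj; rw [hH1]; rw [coeff_X]; simp; omega
  | more m ih1 ih2 =>
      intro j hj
      rw [hH m, coeff_sub, coeff_C_mul, ih1 j (by omega), mul_zero, sub_zero]
      rcases j with _ | j'
      · simp
      · rw [coeff_X_mul, ih2 j' (by omega)]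

lemma H_derivative : ∀ m, derivative (H (m + 1)) = Polynomial.C ((m + 1 : ℕ) : ℚ) * H m := by
  intro m
  induction m using Nat.twoStepInduction with
  | zero => rw [hH1, hH0]; simp
  | one =>
      rw [hH 0, hH1, hH0]
      simp [derivative_mul]
      rw [map_ofNat]
      ring
  | more m ih1 ih2 =>
      rw [hH (m + 1), derivative_sub, derivative_mul, derivative_X, derivative_mul,
        derivative_C, ih2, ih1, hH m]
      push_cast
      simp only [map_add, map_one, map_ofNat]
      ring

lemma LL_H : ∀ m, LL (H m) = if m = 0 then 1 else 0 := by
  intro m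
  induction m using Nat.twoStepInduction with
  | zero => rw [hH0]; simp [LL_one]
  | one => rw [hH1]; simp [LL_X]
  | more m ih1 ih2 =>
      rw [hH m, map_sub]
      have : X * H (m + 1) = X * H (m + 1) := rfl
      rw [LL_stein, H_derivative H hH0 hH1 hH m]
      have e1 : Polynomial.C ((m + 1 : ℕ) : ℚ) * H m = ((m + 1 : ℕ) : ℚ) • H m := by
        rw [smul_eq_C_mul]
      rw [e1, map_smul]
      simp

lemma LL_H_mul_H : ∀ m l, LL (H m * H l)
    = if m = l then ((Nat.factorial m : ℕ) : ℚ) else 0 := by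
  have key : ∀ m l, LL (H (m + 2) * H (l + 1))
      = ((l + 1 : ℕ) : ℚ) * LL (H (m + 1) * H l) := by
    intro m l
    have h1 : H (m + 2) * H (l + 1)
        = X * (H (m + 1) * H (l + 1)) - ((m + 1 : ℕ) : ℚ) • (H m * H (l + 1)) := by
      rw [hH m, smul_eq_C_mul]; ring
    rw [h1, map_sub, map_smul, LL_stein, derivative_mul,
      H_derivative H hH0 hH1 hH m, H_derivative H hH0 hH1 hH l, map_add]
    have e1 : Polynomial.C ((m + 1 : ℕ) : ℚ) * H m * H (l + 1)
        = ((m + 1 : ℕ) : ℚ) • (H m * H (l + 1)) := by rw [smul_eq_C_mul]; ring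
    have e2 : H (m + 1) * (Polynomial.C ((l + 1 : ℕ) : ℚ) * H l)
        = ((l + 1 : ℕ) : ℚ) • (H (m + 1) * H l) := by rw [smul_eq_C_mul]; ring
    rw [e1, e2, map_smul, map_smul]
    simp only [smul_eq_mul]
    ring
  intro m
  induction m using Nat.twoStepInduction with
  | zero =>
      intro l
      rw [hH0, one_mul, LL_H H hH0 hH1 hH l]
      rcases l with _ | l <;> simp [Nat.factorial]
  | one =>
      intro l
      rw [hH1]
      rcases l with _ | l
      · rw [hH0, mul_one, LL_X]; simp
      · rw [LL_stein, H_derivative H hH0 hH1 hH l]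
        have e1 : Polynomial.C ((l + 1 : ℕ) : ℚ) * H l = ((l + 1 : ℕ) : ℚ) • H l := by
          rw [smul_eq_C_mul]
        rw [e1, map_smul, LL_H H hH0 hH1 hH l]
        rcases l with _ | l <;> simp [Nat.factorial]
  | more m ih1 ih2 =>
      intro l
      rcases l with _ | l
      · rw [hH0, mul_one, LL_H H hH0 hH1 hH (m + 2)]
        simp
      · rw [key m l, ih2 l]
        by_cases h : m + 1 = l
        · subst h
          simp [Nat.factorial]
        · have h2 : ¬ (m + 2 = l + 1) := by omega
          simp [h, h2]

end Hermite
lemma even_poly_expand (p : Polynomial ℚ) (N : ℕ) (h1 : p.natDegree < 2 * N)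
    (h2 : ∀ j, j % 2 = 1 → p.coeff j = 0) :
    p = ∑ i ∈ range N, Polynomial.C (p.coeff (2 * i)) * X ^ (2 * i) := by
  ext j
  rw [finset_sum_coeff]
  simp only [coeff_C_mul, coeff_X_pow, mul_ite, mul_one, mul_zero]
  rcases Nat.even_or_odd j with he | ho
  · obtain ⟨i₀, rfl⟩ := he
    by_cases hi : i₀ < N
    · rw [Finset.sum_eq_single i₀]
      · rw [if_pos (by omega)]
        congr 1
        omega
      · intro b _ hb
        exact if_neg (by omega)
      · intro hmem
        exact absurd (Finset.mem_range.mpr hi) hmem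
    · have hc : p.coeff (i₀ + i₀) = 0 := coeff_eq_zero_of_natDegree_lt (by omega)
      rw [hc, Finset.sum_eq_zero]
      intro i hi'
      rw [Finset.mem_range] at hi'
      exact if_neg (by omega)
  · obtain ⟨c, rfl⟩ := ho
    rw [h2 _ (by omega), Finset.sum_eq_zero]
    intro i _
    exact if_neg (by omega)

section Hermite2
variable (H : ℕ → Polynomial ℚ)
    (hH0 : H 0 = 1) (hH1 : H 1 = X)
    (hH : ∀ m, H (m + 2) = X * H (m + 1) - Polynomial.C ((m + 1 : ℕ) : ℚ) * H m)

include hH0 hH1 hH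

lemma H_even_expand (k N : ℕ) (hk : k < N) :
    H (2 * k) = ∑ i ∈ range N, Polynomial.C ((H (2 * k)).coeff (2 * i)) * X ^ (2 * i) := by
  refine even_poly_expand _ _ (lt_of_le_of_lt (H_natDegree_le H hH0 hH1 hH (2 * k)) (by omega)) ?_
  intro j hj
  exact H_coeff_parity H hH0 hH1 hH (2 * k) j (by omega)

lemma H_aux_mul (m : ℕ) : X * H (m + 1) = H (m + 2) + Polynomial.C ((m + 1 : ℕ) : ℚ) * H m := by
  rw [hH m]; ring

lemma H_X_sq (k : ℕ) : X ^ 2 * H (2 * k + 2) =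
    H (2 * k + 4) + Polynomial.C ((4 * k + 5 : ℕ) : ℚ) * H (2 * k + 2)
      + Polynomial.C (((2 * k + 2) * (2 * k + 1) : ℕ) : ℚ) * H (2 * k) := by
  have a1 := H_aux_mul H hH0 hH1 hH (2 * k + 1)
  have a2 := H_aux_mul H hH0 hH1 hH (2 * k)
  have a3 := H_aux_mul H hH0 hH1 hH (2 * k + 2)
  have e1 : 2 * k + 1 + 1 = 2 * k + 2 := by omega
  have e2 : 2 * k + 1 + 2 = 2 * k + 3 := by omega
  have e3 : 2 * k + 2 + 1 = 2 * k + 3 := by omega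
  have e4 : 2 * k + 2 + 2 = 2 * k + 4 := by omega
  rw [e1, e2] at a1
  rw [e3, e4] at a3
  have lhs1 : X ^ 2 * H (2 * k + 2) = X * (X * H (2 * k + 2)) := by ring
  have a2' : X * (Polynomial.C ((2 * k + 2 : ℕ) : ℚ) * H (2 * k + 1))
      = Polynomial.C ((2 * k + 2 : ℕ) : ℚ)
        * (H (2 * k + 2) + Polynomial.C ((2 * k + 1 : ℕ) : ℚ) * H (2 * k)) := by
    rw [mul_left_comm, a2]
  rw [lhs1, a1, mul_add, a3, a2']
  push_cast
  simp only [map_add, map_mul, map_one, map_ofNat]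
  ring

lemma LL_XX_H_H (k l : ℕ) : LL (X ^ 2 * H (2 * k) * H (2 * l)) =
    (if l = k + 1 then (((2 * k + 2).factorial : ℕ) : ℚ) else 0)
    + (if l = k then ((4 * k + 1 : ℕ) : ℚ) * (((2 * k).factorial : ℕ) : ℚ) else 0)
    + (if l + 1 = k then (((2 * k).factorial : ℕ) : ℚ) else 0) := by
  rcases k with _ | k'
  · have h0 : X ^ 2 * H (2 * 0) = H 2 + Polynomial.C (1 : ℚ) * H 0 := by
      rw [hH0, hH 0, hH1, hH0]; ring
    rw [h0, add_mul, map_add]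
    rw [map_one, one_mul, LL_H_mul_H H hH0 hH1 hH 2 (2 * l), LL_H_mul_H H hH0 hH1 hH 0 (2 * l)]
    rcases l with _ | _ | l'' <;> norm_num [Nat.factorial]
  · have e5 : 2 * (k' + 1) = 2 * k' + 2 := by omega
    rw [e5, H_X_sq H hH0 hH1 hH k', add_mul, add_mul, map_add, map_add, mul_assoc, mul_assoc]
    have sC : ∀ (c : ℚ) (p q : Polynomial ℚ), LL (Polynomial.C c * (p * q)) = c * LL (p * q) := by
      intro c p q
      rw [← smul_eq_C_mul, map_smul, smul_eq_mul]
    rw [sC, sC, LL_H_mul_H H hH0 hH1 hH (2 * k' + 4) (2 * l),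
      LL_H_mul_H H hH0 hH1 hH (2 * k' + 2) (2 * l), LL_H_mul_H H hH0 hH1 hH (2 * k') (2 * l)]
    have f1 : ((2 * k' + 2) * (2 * k' + 1) : ℕ) * (2 * k').factorial = (2 * k' + 2).factorial := by
      rw [Nat.factorial_succ, Nat.factorial_succ]; ring
    by_cases h1 : l = k' + 2
    · subst h1
      rw [if_pos (by omega : 2 * k' + 4 = 2 * (k' + 2)), if_neg (by omega), if_neg (by omega),
        if_pos (by omega : k' + 2 = k' + 1 + 1), if_neg (by omega), if_neg (by omega)]
      have hfe : 2 * k' + 2 + 2 = 2 * k' + 4 := by omega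
      rw [hfe]
      ring
    · by_cases h2 : l = k' + 1
      · subst h2
        have : ¬ (2 * k' + 4 = 2 * (k' + 1)) := by omega
        have g2 : (2 * k' + 2 = 2 * (k' + 1)) := by omega
        have g3 : ¬ (2 * k' = 2 * (k' + 1)) := by omega
        rw [if_neg this, if_pos g2, if_neg g3, if_neg (by omega), if_pos rfl, if_neg (by omega)]
        push_cast
        ring
      · by_cases h3 : l = k'
        · subst h3
          rw [if_neg (by omega), if_neg (by omega), if_pos rfl, if_neg (by omega),
            if_neg (by omega), if_pos rfl]
          rw [← f1]
          push_cast
          ring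
        · rw [if_neg (by omega), if_neg (by omega), if_neg (by omega), if_neg (by omega),
            if_neg (by omega), if_neg (by omega)]
          norm_num

end Hermite2
noncomputable def Eent (k l : ℕ) : Polynomial ℚ :=
  if k = l then Polynomial.C (((2 * k).factorial : ℚ)) * (X ^ 2 - Polynomial.C ((4 * k + 1 : ℕ) : ℚ))
  else if k + 1 = l then -Polynomial.C (((2 * k + 2).factorial : ℚ))
  else if l + 1 = k then -Polynomial.C (((2 * k).factorial : ℚ))
  else 0

section DetE
variable (H : ℕ → Polynomial ℚ)
    (hH0 : H 0 = 1) (hH1 : H 1 = X)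
    (hH : ∀ m, H (m + 2) = X * H (m + 1) - Polynomial.C ((m + 1 : ℕ) : ℚ) * H m)

include hH0 hH1 hH

lemma row_sum (n : ℕ) (i : ℕ) (hi : i ≤ n + 1) :
    ∑ k ∈ range (n + 2), Eent i k
        * (Polynomial.C (((∏ j ∈ Finset.Ico k (n + 1), ((2 * j + 2) * (2 * j + 1)) : ℕ) : ℚ))
            * H (2 * k))
      = if i = n + 1 then Polynomial.C (((2 * (n + 1)).factorial : ℚ)) * H (2 * (n + 1) + 2)
        else 0 := by
  set g : ℕ → ℕ := fun k => ∏ j ∈ Finset.Ico k (n + 1), ((2 * j + 2) * (2 * j + 1)) with hg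
  have hgdef : ∀ k, g k = ∏ j ∈ Finset.Ico k (n + 1), ((2 * j + 2) * (2 * j + 1)) :=
    fun k => rfl
  have point : ∀ k, Eent i k * (Polynomial.C ((g k : ℚ)) * H (2 * k)) =
      (if k + 1 = i then
        -(Polynomial.C (((2 * i).factorial : ℚ) * ((g (i - 1) : ℚ))) * H (2 * (i - 1))) else 0)
      + (if k = i then Polynomial.C (((2 * i).factorial : ℚ) * (g i : ℚ))
          * (X ^ 2 - Polynomial.C ((4 * i + 1 : ℕ) : ℚ)) * H (2 * i) else 0)
      + (if k = i + 1 then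
          -(Polynomial.C (((2 * i + 2).factorial : ℚ) * ((g (i + 1) : ℚ))) * H (2 * (i + 1)))
        else 0) := by
    intro k
    by_cases h1 : k = i
    · subst h1
      rw [if_neg (by omega), if_pos rfl, if_neg (by omega), Eent, if_pos rfl]
      rw [map_mul]
      ring
    · by_cases h2 : k = i + 1
      · subst h2
        rw [if_neg (by omega), if_neg (by omega), if_pos rfl, Eent,
          if_neg (by omega), if_pos rfl]
        rw [map_mul]
        ring
      · by_cases h3 : k + 1 = i
        · have hk : k = i - 1 := by omega
          subst hk
          rw [if_pos h3, if_neg (by omega), if_neg (by omega), Eent,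
            if_neg (by omega), if_neg (by omega), if_pos (by omega)]
          rw [map_mul]
          ring
        · rw [if_neg h3, if_neg h1, if_neg h2, Eent,
            if_neg (by omega), if_neg (by omega), if_neg (by omega)]
          simp
  rw [Finset.sum_congr rfl (fun k _ => point k), Finset.sum_add_distrib,
    Finset.sum_add_distrib, Finset.sum_ite_eq' (range (n + 2)) i,
    Finset.sum_ite_eq' (range (n + 2)) (i + 1),
    if_pos (Finset.mem_range.mpr (by omega : i < n + 2))]
  -- now handle the k+1 = i sum and assemble
  rcases i with _ | i'
  · rw [Finset.sum_eq_zero (fun k _ => if_neg (Nat.succ_ne_zero k)),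
      if_pos (Finset.mem_range.mpr (by omega)), if_neg (by omega)]
    have h2 : H 2 = X ^ 2 - Polynomial.C (1 : ℚ) := by
      rw [hH 0, hH1, hH0]
      push_cast
      ring
    have hg0 : g 0 = 2 * g 1 := by
      rw [hgdef, hgdef, Finset.prod_eq_prod_Ico_succ_bot (by omega : 0 < n + 1)]
    rw [hH0, h2, hg0]
    push_cast
    norm_num [Nat.factorial]
  · have hconv : ∀ k, (if k + 1 = i' + 1 then
        -(Polynomial.C (((2 * (i' + 1)).factorial : ℚ) * ((g (i' + 1 - 1) : ℚ)))
          * H (2 * (i' + 1 - 1))) else 0)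
        = (if k = i' then
        -(Polynomial.C (((2 * (i' + 1)).factorial : ℚ) * ((g i' : ℚ)))
          * H (2 * i')) else 0) := by
      intro k
      by_cases h : k = i'
      · subst h
        rw [if_pos rfl, if_pos rfl]
        norm_num
      · rw [if_neg (by omega), if_neg h]
    rw [Finset.sum_congr rfl (fun k _ => hconv k),
      Finset.sum_ite_eq' (range (n + 2)) i',
      if_pos (Finset.mem_range.mpr (by omega : i' < n + 2))]
    have hgrecN : g i' = (2 * i' + 2) * (2 * i' + 1) * g (i' + 1) := by
      rw [hgdef, hgdef, Finset.prod_eq_prod_Ico_succ_bot (by omega : i' < n + 1)]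
    have r1 := H_X_sq H hH0 hH1 hH i'
    have e1 : 2 * (i' + 1) = 2 * i' + 2 := by omega
    have e2 : 2 * (i' + 1) + 2 = 2 * i' + 4 := by omega
    have e3 : 4 * (i' + 1) + 1 = 4 * i' + 5 := by omega
    by_cases hlast : i' + 1 = n + 1
    · -- last row
      have hg1 : g (i' + 1) = 1 := by
        rw [hgdef, hlast, Finset.Ico_self, Finset.prod_empty]
      rw [if_neg (by rw [Finset.mem_range]; omega), if_pos hlast, ← hlast]
      rw [e2, e1, e3, hgrecN, hg1]
      simp only [← Nat.cast_mul, map_natCast] at r1 ⊢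
      push_cast at r1 ⊢
      linear_combination (norm := (push_cast; ring1)) (((2 * i' + 2).factorial : ℚ[X])) * r1
    · rw [if_pos (Finset.mem_range.mpr (by omega : i' + 1 + 1 < n + 2)), if_neg hlast]
      have hgrecN2 : g (i' + 1) = (2 * i' + 4) * (2 * i' + 3) * g (i' + 2) := by
        rw [hgdef, hgdef, Finset.prod_eq_prod_Ico_succ_bot (by omega : i' + 1 < n + 1),
          show 2 * (i' + 1) + 2 = 2 * i' + 4 by omega,
          show 2 * (i' + 1) + 1 = 2 * i' + 3 by omega,
          show i' + 1 + 1 = i' + 2 by omega]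
      have hfac : (2 * i' + 4).factorial = (2 * i' + 4) * ((2 * i' + 3) * (2 * i' + 2).factorial) := by
        rw [show 2 * i' + 4 = (2 * i' + 3) + 1 by omega, Nat.factorial_succ,
          show 2 * i' + 3 = (2 * i' + 2) + 1 by omega, Nat.factorial_succ]
      have e4 : 2 * (i' + 1 + 1) = 2 * i' + 4 := by omega
      have e5 : i' + 1 + 1 = i' + 2 := by omega
      rw [e2, e4, e1, e3, e5, hgrecN, hgrecN2, hfac]
      simp only [← Nat.cast_mul, map_natCast] at r1 ⊢
      push_cast at r1 ⊢
      linear_combination (norm := (push_cast; ring1)) ((((2 * i' + 4) * (2 * i' + 3)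
        * (2 * i' + 2).factorial * g (i' + 2) : ℕ) : ℚ[X])) * r1

lemma det_E : ∀ n : ℕ, (Matrix.of fun k l : Fin (n + 1) => Eent (k : ℕ) (l : ℕ)).det
    = Polynomial.C (∏ k ∈ range (n + 1), (((2 * k).factorial : ℚ))) * H (2 * n + 2) := by
  intro n
  induction n with
  | zero =>
      rw [Matrix.det_fin_one]
      have h2 : H 2 = X ^ 2 - Polynomial.C (1 : ℚ) := by
        rw [hH 0, hH1, hH0]; push_cast; ring
      simp [Eent, h2, Nat.factorial]
  | succ n ih =>
      set U : Matrix (Fin (n + 2)) (Fin (n + 2)) (Polynomial ℚ) := Matrix.of fun i j =>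
        if (j : ℕ) = n + 1 then
          Polynomial.C (((∏ j ∈ Finset.Ico (i : ℕ) (n + 1), ((2 * j + 2) * (2 * j + 1)) : ℕ) : ℚ))
            * H (2 * (i : ℕ))
        else if (i : ℕ) = (j : ℕ) then 1 else 0 with hUdef
      have hU : U.det = H (2 * (n + 1)) := by
        rw [Matrix.det_of_upperTriangular (by
          intro i j hji
          have hji' : (j : ℕ) < (i : ℕ) := hji
          have hii : (i : ℕ) < n + 2 := i.isLt
          simp only [hUdef, Matrix.of_apply]
          rw [if_neg (by omega : ¬ ((j : ℕ) = n + 1)), if_neg (by omega)])]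
        · rw [Fin.prod_univ_castSucc]
          have h1 : ∀ i : Fin (n + 1), U (Fin.castSucc i) (Fin.castSucc i) = 1 := by
            intro i
            simp only [hUdef, Matrix.of_apply, Fin.coe_castSucc]
            rw [if_neg (by have := i.isLt; omega)]
            simp
          rw [Finset.prod_congr rfl (fun i _ => h1 i), Finset.prod_const_one, one_mul]
          have hlastval : ((Fin.last (n + 1) : ℕ)) = n + 1 := rfl
          rw [hUdef, Matrix.of_apply, if_pos hlastval, hlastval, Finset.Ico_self,
            Finset.prod_empty]
          norm_num
      have hEU : (Matrix.of fun k l : Fin (n + 2) => Eent (k : ℕ) (l : ℕ)) * U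
          = Matrix.of fun i j : Fin (n + 2) =>
            if (j : ℕ) = n + 1 then
              (if (i : ℕ) = n + 1 then
                Polynomial.C (((2 * (n + 1)).factorial : ℚ)) * H (2 * (n + 1) + 2) else 0)
            else Eent (i : ℕ) (j : ℕ) := by
        apply Matrix.ext
        intro i j
        rw [Matrix.mul_apply]
        simp only [Matrix.of_apply]
        by_cases hj : (j : ℕ) = n + 1
        · rw [if_pos hj]
          have hcol : ∀ k : Fin (n + 2), Eent (i : ℕ) (k : ℕ) * U k j
              = Eent (i : ℕ) (k : ℕ)
                * (Polynomial.C (((∏ j ∈ Finset.Ico (k : ℕ) (n + 1),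
                    ((2 * j + 2) * (2 * j + 1)) : ℕ) : ℚ)) * H (2 * (k : ℕ))) := by
            intro k
            simp only [hUdef, Matrix.of_apply]
            rw [if_pos hj]
          rw [Finset.sum_congr rfl (fun k _ => hcol k)]
          rw [Fin.sum_univ_eq_sum_range (fun k => Eent (i : ℕ) k
            * (Polynomial.C (((∏ j ∈ Finset.Ico k (n + 1),
                ((2 * j + 2) * (2 * j + 1)) : ℕ) : ℚ)) * H (2 * k))) (n + 2)]
          rw [row_sum H hH0 hH1 hH n (i : ℕ) (by omega)]
        · rw [if_neg hj]
          rw [Finset.sum_eq_single j]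
          · simp only [hUdef, Matrix.of_apply]
            rw [if_neg hj]
            simp
          · intro k _ hk
            simp only [hUdef, Matrix.of_apply]
            rw [if_neg hj, if_neg (fun h => hk (Fin.ext h)), mul_zero]
          · intro h
            exact absurd (Finset.mem_univ j) h
      have hdet := congrArg Matrix.det hEU
      rw [Matrix.det_mul, hU] at hdet
      have hRHS : (Matrix.of fun i j : Fin (n + 2) =>
            if (j : ℕ) = n + 1 then
              (if (i : ℕ) = n + 1 then
                Polynomial.C (((2 * (n + 1)).factorial : ℚ)) * H (2 * (n + 1) + 2) else 0)
            else Eent (i : ℕ) (j : ℕ)).det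
          = Polynomial.C (((2 * (n + 1)).factorial : ℚ)) * H (2 * (n + 1) + 2)
            * (Matrix.of fun k l : Fin (n + 1) => Eent (k : ℕ) (l : ℕ)).det := by
        rw [Matrix.det_succ_column _ (Fin.last (n + 1))]
        rw [Finset.sum_eq_single (Fin.last (n + 1))]
        · simp only [Matrix.of_apply, Fin.val_last, if_true]
          have hsub : ((Matrix.of fun i j : Fin (n + 2) =>
              if (j : ℕ) = n + 1 then
                (if (i : ℕ) = n + 1 then
                  Polynomial.C (((2 * (n + 1)).factorial : ℚ)) * H (2 * (n + 1) + 2) else 0)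
              else Eent (i : ℕ) (j : ℕ)).submatrix (Fin.last (n + 1)).succAbove
                (Fin.last (n + 1)).succAbove)
              = Matrix.of fun k l : Fin (n + 1) => Eent (k : ℕ) (l : ℕ) := by
            ext k l
            simp only [Matrix.submatrix_apply, Matrix.of_apply, Fin.succAbove_last,
              Fin.coe_castSucc]
            rw [if_neg (by omega)]
          rw [hsub]
          have hsgn : ((-1 : Polynomial ℚ)) ^ (n + 1 + (n + 1)) = 1 := by
            rw [show (n + 1) + (n + 1) = 2 * (n + 1) by omega, pow_mul]
            norm_num
          rw [hsgn, one_mul]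
        · intro i _ hi
          simp only [Matrix.of_apply, Fin.val_last, if_true]
          rw [if_neg (fun h => hi (Fin.ext (by rw [h, Fin.val_last])))]
          ring
        · intro h
          exact absurd (Finset.mem_univ _) h
      rw [hRHS, ih] at hdet
      apply mul_right_cancel₀ (H_ne_zero H hH0 hH1 hH (2 * n + 2))
      conv_rhs => rw [Finset.prod_range_succ]
      rw [show 2 * (n + 1) = 2 * n + 2 by omega] at hdet ⊢
      rw [hdet, map_mul]
      ring
lemma LL_pow_HH (r n k l : ℕ) (hk : k ≤ n) (hl : l ≤ n) :
    LL (X ^ r * (H (2 * k) * H (2 * l)))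
      = ∑ i ∈ range (n + 1), ∑ j ∈ range (n + 1),
          (H (2 * k)).coeff (2 * i) * (H (2 * l)).coeff (2 * j) * mmu (2 * i + 2 * j + r) := by
  conv_lhs => rw [H_even_expand H hH0 hH1 hH k (n + 1) (by omega),
    H_even_expand H hH0 hH1 hH l (n + 1) (by omega)]
  rw [Finset.sum_mul_sum, Finset.mul_sum, map_sum]
  refine Finset.sum_congr rfl fun i _ => ?_
  rw [Finset.mul_sum, map_sum]
  refine Finset.sum_congr rfl fun j _ => ?_
  have hterm : X ^ r * (Polynomial.C ((H (2 * k)).coeff (2 * i)) * X ^ (2 * i)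
        * (Polynomial.C ((H (2 * l)).coeff (2 * j)) * X ^ (2 * j)))
      = Polynomial.C ((H (2 * k)).coeff (2 * i) * (H (2 * l)).coeff (2 * j))
        * X ^ (2 * i + 2 * j + r) := by
    rw [map_mul]
    ring
  rw [hterm, LL_C_mul_X_pow]

end DetE

theorem hermite_hankel_det (n : ℕ)
    (H : ℕ → Polynomial ℚ)
    (hH0 : H 0 = 1) (hH1 : H 1 = X)
    (hH : ∀ m, H (m + 2) = X * H (m + 1) - Polynomial.C ((m + 1 : ℕ) : ℚ) * H m)
    (a : ℕ → ℚ)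
    (ha : ∀ m, a m = ∏ k ∈ range m, ((2 * k + 1 : ℕ) : ℚ)) :
    (Matrix.of fun i j : Fin (n + 1) =>
        Polynomial.C (a ((i : ℕ) + (j : ℕ)))
          * (X ^ 2 - Polynomial.C ((2 * ((i : ℕ) + (j : ℕ)) + 1 : ℕ) : ℚ))).det
      = Polynomial.C ((Matrix.of fun i j : Fin (n + 1) =>
          a ((i : ℕ) + (j : ℕ))).det) * H (2 * n + 2) := by
  classical
  set P : Matrix (Fin (n + 1)) (Fin (n + 1)) ℚ :=
    Matrix.of fun k i => (H (2 * (k : ℕ))).coeff (2 * (i : ℕ)) with hPdef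
  set Aq : Matrix (Fin (n + 1)) (Fin (n + 1)) ℚ :=
    Matrix.of fun i j => a ((i : ℕ) + (j : ℕ)) with hAdef
  set Bq : Matrix (Fin (n + 1)) (Fin (n + 1)) ℚ :=
    Matrix.of fun i j => a ((i : ℕ) + (j : ℕ) + 1) with hBdef
  have hmmuA : ∀ i j : ℕ, a (i + j) = mmu (2 * i + 2 * j + 0) := by
    intro i j
    rw [show 2 * i + 2 * j + 0 = 2 * (i + j) by ring, mmu_even, ha]
  have hmmuB : ∀ i j : ℕ, a (i + j + 1) = mmu (2 * i + 2 * j + 2) := by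
    intro i j
    rw [show 2 * i + 2 * j + 2 = 2 * (i + j + 1) by ring, mmu_even, ha]
  have key : ∀ (r : ℕ) (k l : Fin (n + 1)),
      (∑ j : Fin (n + 1), (∑ i : Fin (n + 1),
          (H (2 * (k : ℕ))).coeff (2 * (i : ℕ)) * mmu (2 * (i : ℕ) + 2 * (j : ℕ) + r))
        * (H (2 * (l : ℕ))).coeff (2 * (j : ℕ)))
      = LL (X ^ r * (H (2 * (k : ℕ)) * H (2 * (l : ℕ)))) := by
    intro r k l
    have hk : (k : ℕ) ≤ n := by have := k.isLt; omega
    have hl : (l : ℕ) ≤ n := by have := l.isLt; omega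
    rw [LL_pow_HH H hH0 hH1 hH r n (k : ℕ) (l : ℕ) hk hl]
    rw [Fin.sum_univ_eq_sum_range (fun j => (∑ i : Fin (n + 1),
      (H (2 * (k : ℕ))).coeff (2 * (i : ℕ)) * mmu (2 * (i : ℕ) + 2 * j + r))
        * (H (2 * (l : ℕ))).coeff (2 * j)) (n + 1)]
    rw [Finset.sum_comm]
    refine Finset.sum_congr rfl fun j _ => ?_
    rw [Finset.sum_mul, Fin.sum_univ_eq_sum_range (fun i =>
      (H (2 * (k : ℕ))).coeff (2 * i) * mmu (2 * i + 2 * j + r)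
        * (H (2 * (l : ℕ))).coeff (2 * j)) (n + 1)]
    refine Finset.sum_congr rfl fun i _ => ?_
    ring
  have hPA : P * Aq * P.transpose = Matrix.of (fun k l : Fin (n + 1) =>
      if (k : ℕ) = (l : ℕ) then (((2 * (k : ℕ)).factorial : ℚ)) else 0) := by
    apply Matrix.ext
    intro k l
    simp only [Matrix.mul_apply, Matrix.transpose_apply, hPdef, hAdef, Matrix.of_apply]
    have hstep : ∀ j : Fin (n + 1), (∑ i : Fin (n + 1),
        (H (2 * (k : ℕ))).coeff (2 * (i : ℕ)) * a ((i : ℕ) + (j : ℕ)))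
          * (H (2 * (l : ℕ))).coeff (2 * (j : ℕ))
        = (∑ i : Fin (n + 1), (H (2 * (k : ℕ))).coeff (2 * (i : ℕ))
            * mmu (2 * (i : ℕ) + 2 * (j : ℕ) + 0)) * (H (2 * (l : ℕ))).coeff (2 * (j : ℕ)) := by
      intro j
      congr 1
      exact Finset.sum_congr rfl fun i _ => by rw [hmmuA]
    rw [Finset.sum_congr rfl fun j _ => hstep j, key 0 k l, pow_zero, one_mul,
      LL_H_mul_H H hH0 hH1 hH]
    by_cases hkl : (k : ℕ) = (l : ℕ)
    · rw [if_pos (by omega), if_pos hkl]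
    · rw [if_neg (by omega), if_neg hkl]
  have hPB : P * Bq * P.transpose = Matrix.of (fun k l : Fin (n + 1) =>
      if (k : ℕ) = (l : ℕ) then ((4 * (k : ℕ) + 1 : ℕ) : ℚ) * (((2 * (k : ℕ)).factorial : ℚ))
      else if (k : ℕ) + 1 = (l : ℕ) then (((2 * (k : ℕ) + 2).factorial : ℚ))
      else if (l : ℕ) + 1 = (k : ℕ) then (((2 * (k : ℕ)).factorial : ℚ))
      else 0) := by
    apply Matrix.ext
    intro k l
    simp only [Matrix.mul_apply, Matrix.transpose_apply, hPdef, hBdef, Matrix.of_apply]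
    have hstep : ∀ j : Fin (n + 1), (∑ i : Fin (n + 1),
        (H (2 * (k : ℕ))).coeff (2 * (i : ℕ)) * a ((i : ℕ) + (j : ℕ) + 1))
          * (H (2 * (l : ℕ))).coeff (2 * (j : ℕ))
        = (∑ i : Fin (n + 1), (H (2 * (k : ℕ))).coeff (2 * (i : ℕ))
            * mmu (2 * (i : ℕ) + 2 * (j : ℕ) + 2)) * (H (2 * (l : ℕ))).coeff (2 * (j : ℕ)) := by
      intro j
      congr 1
      exact Finset.sum_congr rfl fun i _ => by rw [hmmuB]
    rw [Finset.sum_congr rfl fun j _ => hstep j, key 2 k l, ← mul_assoc,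
      LL_XX_H_H H hH0 hH1 hH]
    split_ifs <;> try (exfalso; omega)
    all_goals (push_cast; ring)
  -- the polynomial matrix
  have hM : (Matrix.of fun i j : Fin (n + 1) =>
        Polynomial.C (a ((i : ℕ) + (j : ℕ)))
          * (X ^ 2 - Polynomial.C ((2 * ((i : ℕ) + (j : ℕ)) + 1 : ℕ) : ℚ)))
      = (X ^ 2 : Polynomial ℚ) • (Aq.map Polynomial.C) - Bq.map Polynomial.C := by
    apply Matrix.ext
    intro i j
    simp only [Matrix.of_apply, Matrix.sub_apply, Matrix.smul_apply, Matrix.map_apply,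
      hAdef, hBdef, Matrix.of_apply, smul_eq_mul]
    have harec : a ((i : ℕ) + (j : ℕ) + 1)
        = a ((i : ℕ) + (j : ℕ)) * ((2 * ((i : ℕ) + (j : ℕ)) + 1 : ℕ) : ℚ) := by
      rw [ha, ha, Finset.prod_range_succ]
    rw [harec, map_mul]
    ring
  have hE : (P.map Polynomial.C) * (Matrix.of fun i j : Fin (n + 1) =>
        Polynomial.C (a ((i : ℕ) + (j : ℕ)))
          * (X ^ 2 - Polynomial.C ((2 * ((i : ℕ) + (j : ℕ)) + 1 : ℕ) : ℚ)))
        * (P.map Polynomial.C).transpose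
      = Matrix.of fun k l : Fin (n + 1) => Eent (k : ℕ) (l : ℕ) := by
    rw [hM, Matrix.mul_sub, Matrix.sub_mul, Matrix.mul_smul, Matrix.smul_mul,
      ← Matrix.transpose_map, ← Matrix.map_mul, ← Matrix.map_mul,
      ← Matrix.map_mul, ← Matrix.map_mul, hPA, hPB]
    apply Matrix.ext
    intro k l
    simp only [Matrix.sub_apply, Matrix.smul_apply, Matrix.map_apply, Matrix.of_apply,
      smul_eq_mul, Eent]
    split_ifs <;> try (exfalso; omega)
    all_goals first | (rw [map_mul]; push_cast; ring) | simp
  -- determinant of P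
  have hdP : P.det = 1 := by
    rw [Matrix.det_of_lowerTriangular P (by
      intro i j hij
      have hij' : (i : ℕ) < (j : ℕ) := hij
      simp only [hPdef, Matrix.of_apply]
      exact coeff_eq_zero_of_natDegree_lt
        (lt_of_le_of_lt (H_natDegree_le H hH0 hH1 hH (2 * (i : ℕ))) (by omega)))]
    rw [Finset.prod_eq_one]
    intro i _
    simp only [hPdef, Matrix.of_apply]
    exact H_coeff_self H hH0 hH1 hH (2 * (i : ℕ))
  have hdPc : (P.map Polynomial.C).det = 1 := by
    have hmd := RingHom.map_det (Polynomial.C : ℚ →+* Polynomial ℚ) P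
    rw [hdP, map_one] at hmd
    exact hmd.symm
  have hdPcT : ((P.map Polynomial.C).transpose).det = 1 := by
    rw [Matrix.det_transpose, hdPc]
  -- determinant of Aq
  have hdDq : (Matrix.of (fun k l : Fin (n + 1) =>
      if (k : ℕ) = (l : ℕ) then (((2 * (k : ℕ)).factorial : ℚ)) else 0)).det
      = ∏ k ∈ range (n + 1), (((2 * k).factorial : ℚ)) := by
    have : (Matrix.of (fun k l : Fin (n + 1) =>
        if (k : ℕ) = (l : ℕ) then (((2 * (k : ℕ)).factorial : ℚ)) else 0))
        = Matrix.diagonal (fun k : Fin (n + 1) => (((2 * (k : ℕ)).factorial : ℚ))) := by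
      apply Matrix.ext
      intro k l
      simp only [Matrix.of_apply, Matrix.diagonal_apply]
      by_cases h : k = l
      · rw [if_pos (by rw [h]), if_pos h]
      · rw [if_neg (fun hh => h (Fin.ext hh)), if_neg h]
    rw [this, Matrix.det_diagonal]
    exact Fin.prod_univ_eq_prod_range (fun k => (((2 * k).factorial : ℚ))) (n + 1)
  have hdA : Aq.det = ∏ k ∈ range (n + 1), (((2 * k).factorial : ℚ)) := by
    have := congrArg Matrix.det hPA
    rw [Matrix.det_mul, Matrix.det_mul, hdP, Matrix.det_transpose, hdP, one_mul, mul_one,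
      hdDq] at this
    exact this
  -- conclude
  have hdetE := congrArg Matrix.det hE
  rw [Matrix.det_mul, Matrix.det_mul, hdPc, hdPcT, one_mul, mul_one,
    det_E H hH0 hH1 hH n] at hdetE
  rw [hdetE, hdA]
end

section
/- Define Motzkin polynomials M_n(u) as the moments satisfying: the orthogonal polynomials P_n(x) = F_{n+1}(x−u, −1) with linear functional F_u(x^n) = M_n(u), F_u(P_n) = [n=0]. Equivalently, M_n(u) = Σ over Motzkin paths of length n weighted u^{#level steps}. Then det((M_{i+j+1}(u))_{i,j=0}^{n}) = F_{n+2}(u, −1), where F_m(x,s) are the Fibonacci polynomials. -/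
/-!
Let `triangle x m k` be the weighted number of Motzkin paths of length `m` from height `0` to
height `k`, a level step having weight `x`: it is `Jᵐ δ₀` for the transfer operator `J = step x`
of these walks, and `M m = triangle x m 0`. Cutting a path of length `i + j + 1` after `i + 1`
steps and reading the last `j` steps backwards gives
`M (i + j + 1) = ∑ k, ∑ l, triangle x i k * J k l * triangle x j l`, where `J k l` is the weight
of a single step from `k` to `l`: `J` is the tridiagonal Jacobi matrix (`x` on the diagonal, `1`
beside it). So the shifted Hankel matrix is
`A J Aᵀ` with `A` unitriangular, and its determinant is the continuant `det J`, which obeys the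
Fibonacci recurrence.

The closed form of `M m` comes from expanding `step x = step 0 + x` binomially (the level step
commutes with everything) and counting the Dyck paths of `step 0` by the ballot numbers of the
reflection principle.
-/

open Polynomial Finset

lemma catalan_add_choose_succ (j : ℕ) :
    catalan j + (2 * j).choose (j + 1) = (2 * j).choose j := by
  have h₁ : (j + 1) * catalan j = (2 * j).choose j := by
    rw [succ_mul_catalan_eq_centralBinom, Nat.centralBinom]
  have h₂ : (2 * j).choose (j + 1) * (j + 1) = (2 * j).choose j * (2 * j - j) :=
    Nat.choose_succ_right_eq _ _
  rw [show 2 * j - j = j by omega] at h₂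
  refine Nat.eq_of_mul_eq_mul_left (by omega : 0 < j + 1) ?_
  calc (j + 1) * (catalan j + (2 * j).choose (j + 1))
      = (j + 1) * catalan j + (2 * j).choose (j + 1) * (j + 1) := by ring
    _ = (j + 1) * (2 * j).choose j := by rw [h₁, h₂]; ring

lemma Finset.sum_range_succ_eq_sum_range_two_mul {M : Type*} [AddCommMonoid M] {f : ℕ → M}
    (hf : ∀ k, f (2 * k + 1) = 0) (m : ℕ) :
    ∑ p ∈ range (m + 1), f p = ∑ k ∈ range (m / 2 + 1), f (2 * k) := by
  induction m with
  | zero => simp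
  | succ m ih =>
    rw [sum_range_succ f (m + 1), ih]
    obtain ⟨t, ht | ht⟩ := Nat.even_or_odd' (m + 1)
    · rw [show (m + 1) / 2 + 1 = m / 2 + 1 + 1 by omega, sum_range_succ _ (m / 2 + 1),
        show 2 * (m / 2 + 1) = m + 1 by omega]
    · rw [ht, hf, add_zero, show (2 * t + 1) / 2 = m / 2 by omega]

namespace Motzkin

variable {R : Type*} [CommRing R]

def step (x : R) : Module.End R (ℕ → R) where
  toFun v
    | 0 => x * v 0 + v 1
    | k + 1 => v k + x * v (k + 1) + v (k + 2)
  map_add' v w := by funext k; cases k <;> simp only [Pi.add_apply] <;> ring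
  map_smul' c v := by
    funext k; cases k <;> simp only [Pi.smul_apply, smul_eq_mul, RingHom.id_apply] <;> ring

@[simp] lemma step_apply_zero (x : R) (v : ℕ → R) : step x v 0 = x * v 0 + v 1 := rfl

@[simp] lemma step_apply_succ (x : R) (v : ℕ → R) (k : ℕ) :
    step x v (k + 1) = v k + x * v (k + 1) + v (k + 2) := rfl

lemma step_eq_add_smul_one (x : R) : step x = step 0 + x • 1 := by
  ext v k; cases k <;> simp [add_comm, add_left_comm, add_assoc]

def triangle (x : R) (m : ℕ) : ℕ → R := (step x ^ m) (Pi.single 0 1)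

lemma triangle_zero (x : R) : triangle x 0 = Pi.single 0 1 := rfl

lemma triangle_succ (x : R) (m : ℕ) : triangle x (m + 1) = step x (triangle x m) := by
  rw [triangle, pow_succ', Module.End.mul_apply, triangle]

lemma triangle_eq_zero_of_lt (x : R) {m k : ℕ} (h : m < k) : triangle x m k = 0 := by
  induction m generalizing k with
  | zero => simp [triangle_zero, h.ne']
  | succ m ih =>
    obtain ⟨k, rfl⟩ := Nat.exists_eq_add_one_of_ne_zero (by omega : k ≠ 0)
    simp [triangle_succ, ih (by omega : m < k), ih (by omega : m < k + 1),
      ih (by omega : m < k + 2)]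

lemma triangle_self (x : R) (m : ℕ) : triangle x m m = 1 := by
  induction m with
  | zero => simp [triangle_zero]
  | succ m ih => simp [triangle_succ, ih, triangle_eq_zero_of_lt x (Nat.lt_succ_self m),
      triangle_eq_zero_of_lt x (by omega : m < m + 2)]

lemma triangle_eq_sum_choose_mul (x : R) (m k : ℕ) :
    triangle x m k = ∑ ℓ ∈ range (m + 1), x ^ (m - ℓ) * m.choose ℓ * triangle 0 ℓ k := by
  have hc : Commute (step (0 : R)) (x • 1) := (Commute.one_right _).smul_right x
  rw [triangle, step_eq_add_smul_one, hc.add_pow, LinearMap.coe_sum, Finset.sum_apply,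
    Finset.sum_apply]
  refine sum_congr rfl fun ℓ _ => ?_
  simp only [triangle, _root_.smul_pow, one_pow, mul_smul_comm, mul_one, smul_mul_assoc,
    LinearMap.smul_apply, Module.End.mul_apply, Module.End.natCast_apply, map_nsmul, Pi.smul_apply,
    smul_eq_mul]
  rw [nsmul_eq_mul]
  ring

def ballot (n k : ℕ) : R :=
  if k ≤ n ∧ (n - k) % 2 = 0 then n.choose ((n - k) / 2) - n.choose ((n + k) / 2 + 1) else 0

lemma ballot_of_lt {n k : ℕ} (h : n < k) : ballot n k = (0 : R) := by
  rw [ballot, if_neg (by omega)]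

lemma ballot_of_odd {n k : ℕ} (h : (n + k) % 2 = 1) : ballot n k = (0 : R) := by
  rw [ballot, if_neg (by omega)]

lemma ballot_add_two_mul (k j : ℕ) :
    ballot (k + 2 * j) k = ((k + 2 * j).choose j - (k + 2 * j).choose (k + j + 1) : R) := by
  rw [ballot, if_pos (by omega), show (k + 2 * j - k) / 2 = j by omega,
    show (k + 2 * j + k) / 2 + 1 = k + j + 1 by omega]

lemma ballot_self (k : ℕ) : ballot k k = (1 : R) := by
  simpa [Nat.choose_eq_zero_of_lt] using ballot_add_two_mul (R := R) k 0

lemma ballot_succ_zero (n : ℕ) : ballot (n + 1) 0 = (ballot n 1 : R) := by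
  obtain ⟨j, rfl | rfl⟩ := Nat.even_or_odd' n
  · rw [ballot_of_odd (by omega), ballot_of_odd (by omega)]
  · have h₁ := ballot_add_two_mul (R := R) 0 (j + 1)
    have h₂ := ballot_add_two_mul (R := R) 1 j
    rw [show 0 + 2 * (j + 1) = 2 * j + 1 + 1 by ring] at h₁
    rw [show 1 + 2 * j = 2 * j + 1 by ring] at h₂
    rw [h₁, h₂, Nat.choose_succ_succ', Nat.choose_succ_succ' _ (0 + (j + 1))]
    push_cast
    ring_nf

lemma ballot_succ_succ (n k : ℕ) :
    ballot (n + 1) (k + 1) = (ballot n k + ballot n (k + 2) : R) := by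
  obtain h | h | ⟨j, rfl⟩ : n < k ∨ (n + k) % 2 = 1 ∨ ∃ j, n = k + 2 * j := by
    rcases lt_or_ge n k with h | h
    · exact .inl h
    · obtain ⟨j, hj | hj⟩ := Nat.even_or_odd' (n - k)
      exacts [.inr (.inr ⟨j, by omega⟩), .inr (.inl (by omega))]
  · rw [ballot_of_lt h, ballot_of_lt (by omega), ballot_of_lt (by omega), add_zero]
  · rw [ballot_of_odd h, ballot_of_odd (by omega), ballot_of_odd (by omega), add_zero]
  · rcases j with _ | j
    · rw [mul_zero, add_zero, ballot_self, ballot_self, ballot_of_lt (by omega), add_zero]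
    · have h₁ := ballot_add_two_mul (R := R) (k + 1) (j + 1)
      have h₂ := ballot_add_two_mul (R := R) k (j + 1)
      have h₃ := ballot_add_two_mul (R := R) (k + 2) j
      rw [show k + 1 + 2 * (j + 1) = k + 2 * (j + 1) + 1 by ring] at h₁
      rw [show k + 2 + 2 * j = k + 2 * (j + 1) by ring] at h₃
      rw [h₁, h₂, h₃, Nat.choose_succ_succ', Nat.choose_succ_succ' _ (k + 1 + (j + 1))]
      push_cast
      ring_nf

lemma triangle_zero_eq_ballot (n k : ℕ) : triangle (0 : R) n k = ballot n k := by
  induction n generalizing k with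
  | zero =>
    rcases k with _ | k
    · simp [triangle_zero, ballot_self]
    · simp [triangle_zero, ballot_of_lt]
  | succ n ih =>
    rcases k with _ | k
    · simp [triangle_succ, ih, ballot_succ_zero]
    · simp [triangle_succ, ih, ballot_succ_succ]

lemma triangle_zero_two_mul_apply_zero (j : ℕ) : triangle (0 : R) (2 * j) 0 = catalan j := by
  have h := ballot_add_two_mul (R := R) 0 j
  simp only [zero_add] at h
  rw [triangle_zero_eq_ballot, h, ← catalan_add_choose_succ]
  push_cast
  ring

lemma triangle_zero_two_mul_add_one_apply_zero (j : ℕ) : triangle (0 : R) (2 * j + 1) 0 = 0 := by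
  rw [triangle_zero_eq_ballot, ballot_of_odd (by omega)]

lemma triangle_apply_zero (x : R) (m : ℕ) :
    triangle x m 0 =
      ∑ k ∈ range (m / 2 + 1), ((m.choose (2 * k) * catalan k : ℕ) : R) * x ^ (m - 2 * k) := by
  rw [triangle_eq_sum_choose_mul, sum_range_succ_eq_sum_range_two_mul]
  · refine sum_congr rfl fun k _ => ?_
    rw [triangle_zero_two_mul_apply_zero]
    push_cast
    ring
  · intro k
    rw [triangle_zero_two_mul_add_one_apply_zero, mul_zero]

def jacobi (x : R) (k l : ℕ) : R :=
  (if k = l then x else 0) + (if k + 1 = l then 1 else 0) + (if l + 1 = k then 1 else 0)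

lemma jacobi_comm (x : R) (k l : ℕ) : jacobi x k l = jacobi x l k := by
  simp only [jacobi, eq_comm (a := k)]; ring

lemma step_apply_eq_sum (x : R) {v : ℕ → R} {N k : ℕ} (hv : ∀ l, N ≤ l → v l = 0) (hk : k < N) :
    step x v k = ∑ l ∈ range N, v l * jacobi x l k := by
  have hv' : ∀ l, (if l < N then v l else 0) = v l := fun l => by
    split_ifs with h
    · rfl
    · exact (hv l (not_lt.1 h)).symm
  rcases k with _ | k
  · simp [jacobi, mul_add, sum_add_distrib, hk, hv', mul_comm]
  · simp only [step_apply_succ, jacobi, Nat.add_right_cancel_iff, mul_add, mul_ite, mul_zero,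
      mul_one, sum_add_distrib, sum_ite_eq, sum_ite_eq', mem_range, hk, if_true, hv']
    ring

lemma triangle_succ_eq_sum (x : R) {m N k : ℕ} (hm : m < N) (hk : k < N) :
    triangle x (m + 1) k = ∑ l ∈ range N, triangle x m l * jacobi x l k := by
  rw [triangle_succ, step_apply_eq_sum x (fun l hl => triangle_eq_zero_of_lt x (by omega)) hk]

lemma sum_triangle_mul_triangle_of_add_lt (x : R) {N : ℕ} {i j : ℕ} (h : i + j < N) :
    ∑ k ∈ range N, triangle x i k * triangle x j k = triangle x (i + j) 0 := by
  induction j generalizing i with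
  | zero => simp [triangle_zero, Pi.single_apply, show 0 < N by omega]
  | succ j ih =>
    calc ∑ k ∈ range N, triangle x i k * triangle x (j + 1) k
        = ∑ k ∈ range N, ∑ l ∈ range N, triangle x i k * triangle x j l * jacobi x l k := by
          refine sum_congr rfl fun k hk => ?_
          rw [triangle_succ_eq_sum x (by omega) (mem_range.1 hk), mul_sum]
          simp only [mul_assoc]
      _ = ∑ l ∈ range N, triangle x (i + 1) l * triangle x j l := by
          rw [sum_comm]
          refine sum_congr rfl fun l hl => ?_
          rw [triangle_succ_eq_sum x (by omega) (mem_range.1 hl), sum_mul]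
          refine sum_congr rfl fun k _ => ?_
          rw [jacobi_comm]
          ring
      _ = triangle x (i + (j + 1)) 0 := by rw [ih (by omega), add_right_comm, add_assoc]

lemma sum_triangle_mul_triangle (x : R) {i j N : ℕ} (hj : j < N) :
    ∑ k ∈ range N, triangle x i k * triangle x j k = triangle x (i + j) 0 := by
  rw [← sum_triangle_mul_triangle_of_add_lt x (by omega : i + j < N + i)]
  refine sum_subset (range_subset_range.2 (by omega)) fun k _ hk => ?_
  rw [triangle_eq_zero_of_lt x (hj.trans_le (not_lt.1 (mem_range.not.1 hk))), mul_zero]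

def jacobiMatrix (x : R) (n : ℕ) : Matrix (Fin n) (Fin n) R := Matrix.of fun k l => jacobi x k l

def triangleMatrix (x : R) (n : ℕ) : Matrix (Fin n) (Fin n) R := Matrix.of fun i k => triangle x i k

lemma det_triangleMatrix (x : R) (n : ℕ) : (triangleMatrix x n).det = 1 := by
  rw [Matrix.det_of_isLowerTriangular (triangleMatrix x n) fun i k h => triangle_eq_zero_of_lt x h]
  simp [triangleMatrix, triangle_self]

lemma triangleMatrix_mul_jacobiMatrix (x : R) (n : ℕ) :
    triangleMatrix x n * jacobiMatrix x n = Matrix.of fun i k : Fin n => triangle x (i + 1) k := by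
  ext i k
  simp [Matrix.mul_apply, triangleMatrix, jacobiMatrix, triangle_succ_eq_sum x i.2 k.2,
    Fin.sum_univ_eq_sum_range (fun l => triangle x i l * jacobi x l k)]

lemma hankel_eq_triangleMatrix_mul (x : R) (n : ℕ) :
    Matrix.of (fun i j : Fin n => triangle x (i + j + 1) 0) =
      triangleMatrix x n * jacobiMatrix x n * (triangleMatrix x n).transpose := by
  rw [triangleMatrix_mul_jacobiMatrix]
  ext i j
  simp [Matrix.mul_apply, triangleMatrix,
    Fin.sum_univ_eq_sum_range (fun k => triangle x (i + 1) k * triangle x j k),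
    sum_triangle_mul_triangle x j.2, add_right_comm]

lemma jacobiMatrix_submatrix_succ (x : R) (m : ℕ) :
    (jacobiMatrix x (m + 1)).submatrix Fin.succ Fin.succ = jacobiMatrix x m := by
  ext k l; simp [jacobiMatrix, jacobi]

lemma det_jacobiMatrix_add_two (x : R) (m : ℕ) :
    (jacobiMatrix x (m + 2)).det = x * (jacobiMatrix x (m + 1)).det - (jacobiMatrix x m).det := by
  have hminor : ((jacobiMatrix x (m + 2)).submatrix Fin.succ (Fin.succAbove 1)).det =
      (jacobiMatrix x m).det := by
    have hcorner : ((jacobiMatrix x (m + 2)).submatrix Fin.succ (Fin.succAbove 1)).submatrix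
        Fin.succ Fin.succ = jacobiMatrix x m := by
      ext k l; simp [jacobiMatrix, jacobi]
    rw [Matrix.det_succ_column_zero, Fin.sum_univ_succ, Fin.succAbove_zero, hcorner]
    simp [jacobiMatrix, jacobi]
  rw [Matrix.det_succ_row_zero, Fin.sum_univ_succ, Fin.sum_univ_succ, Fin.succAbove_zero,
    jacobiMatrix_submatrix_succ, Fin.succ_zero_eq_one, hminor]
  simp [jacobiMatrix, jacobi, sub_eq_add_neg]

lemma det_jacobiMatrix (x : R) (F : ℕ → R) (hF0 : F 0 = 0) (hF1 : F 1 = 1)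
    (hF : ∀ m, F (m + 2) = x * F (m + 1) - F m) (m : ℕ) :
    (jacobiMatrix x m).det = F (m + 1) := by
  induction m using Nat.twoStepInduction with
  | zero => simp [hF1]
  | one => simp [jacobiMatrix, jacobi, hF 0, hF0, hF1]
  | more m ih₀ ih₁ =>
    rw [det_jacobiMatrix_add_two, ih₀, ih₁, show m + 2 + 1 = m + 1 + 2 by ring, hF (m + 1), hF m]

theorem det_hankel_triangle (x : R) (F : ℕ → R) (hF0 : F 0 = 0) (hF1 : F 1 = 1)
    (hF : ∀ m, F (m + 2) = x * F (m + 1) - F m) (n : ℕ) :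
    (Matrix.of fun i j : Fin n => triangle x (i + j + 1) 0).det = F (n + 1) := by
  rw [hankel_eq_triangleMatrix_mul, Matrix.det_mul, Matrix.det_mul, Matrix.det_transpose,
    det_triangleMatrix, det_jacobiMatrix x F hF0 hF1 hF, one_mul, mul_one]

end Motzkin

theorem motzkin_poly_shifted_hankel_det (n : ℕ)
    (M : ℕ → Polynomial ℤ)
    (hM : ∀ m, M m = ∑ k ∈ range (m / 2 + 1),
        Polynomial.C ((m.choose (2 * k) * catalan k : ℕ) : ℤ) * X ^ (m - 2 * k))
    (F : ℕ → Polynomial ℤ)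
    (hF0 : F 0 = 0) (hF1 : F 1 = 1)
    (hF : ∀ m, F (m + 2) = X * F (m + 1) - F m) :
    (Matrix.of fun i j : Fin (n + 1) => M ((i : ℕ) + (j : ℕ) + 1)).det = F (n + 2) := by
  have hM' : ∀ m, M m = Motzkin.triangle X m 0 := fun m => by
    rw [hM, Motzkin.triangle_apply_zero]
    simp
  simp only [hM']
  exact Motzkin.det_hankel_triangle X F hF0 hF1 hF (n + 1)
end

section
/- With M_n(u) the Motzkin polynomials, det((M_{i+j}(u) + M_{i+j+1}(u))_{i,j=0}^{n}) = F_{n+2}(u+1, −1). -/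
open Polynomial Finset
open Matrix

noncomputable section MotzkinAux

/-- binomial coefficient with integer lower index (0 for negative). -/
def intCh (n : ℕ) (k : ℤ) : ℤ := if k < 0 then 0 else n.choose k.toNat

lemma intCh_neg {n : ℕ} {k : ℤ} (h : k < 0) : intCh n k = 0 := by simp [intCh, h]

lemma intCh_coe (n m : ℕ) : intCh n (m : ℕ) = n.choose m := by simp [intCh]

lemma intCh_eq_zero {n : ℕ} {k : ℤ} (h : (n : ℤ) < k) : intCh n k = 0 := by
  unfold intCh
  split
  · rfl
  · rename_i h2
    push_neg at h2
    have : n < k.toNat := by omega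
    simp [Nat.choose_eq_zero_of_lt this]

lemma intCh_pascal (n : ℕ) (k : ℤ) : intCh (n + 1) k = intCh n k + intCh n (k - 1) := by
  rcases lt_trichotomy k 0 with h | h | h
  · rw [intCh_neg h, intCh_neg h, intCh_neg (by omega)]; ring
  · subst h; simp [intCh]
  · obtain ⟨m, rfl⟩ : ∃ m : ℕ, k = (m : ℤ) + 1 := ⟨(k - 1).toNat, by omega⟩
    have h1 : ((m : ℤ) + 1) = ((m + 1 : ℕ) : ℤ) := by push_cast; ring
    rw [h1]
    have h2 : (((m + 1 : ℕ) : ℤ) - 1) = ((m : ℕ) : ℤ) := by push_cast; ring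
    rw [h2, intCh_coe, intCh_coe, intCh_coe]
    rw [Nat.choose_succ_succ]
    simp only [Nat.succ_eq_add_one]
    push_cast
    exact add_comm _ _

/-- ballot number: paths with j down steps from 0 to k (j up-steps count k + j). -/
def Bal (j : ℤ) (k : ℕ) : ℤ :=
  if j < 0 then 0 else intCh (k + 2 * j.toNat) j - intCh (k + 2 * j.toNat) (j - 1)

lemma Bal_neg {j : ℤ} (k : ℕ) (h : j < 0) : Bal j k = 0 := by simp [Bal, h]

lemma Bal_zero (k : ℕ) : Bal 0 k = 1 := by
  simp [Bal, intCh_neg (show (0:ℤ) - 1 < 0 by norm_num), intCh]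

lemma Bal_coe (j k : ℕ) : Bal (j : ℤ) k =
    intCh (k + 2 * j) (j : ℤ) - intCh (k + 2 * j) ((j : ℤ) - 1) := by
  simp [Bal]

lemma Bal_succ_zero (j : ℕ) : Bal ((j : ℤ) + 1) 0 = Bal (j : ℤ) 1 := by
  have h1 : ((j : ℤ) + 1) = ((j + 1 : ℕ) : ℤ) := by push_cast; ring
  rw [h1, Bal_coe, Bal_coe]
  have h2 : (((j + 1 : ℕ) : ℤ) - 1) = ((j : ℕ) : ℤ) := by push_cast; ring
  rw [h2]
  rcases j with _ | m
  · simp [intCh]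
  · have h3 : (((m + 1 : ℕ) : ℤ) - 1) = ((m : ℕ) : ℤ) := by push_cast; ring
    rw [h3]
    have e1 : (0 + 2 * (m + 1 + 1) : ℕ) = (2 * (m + 1) + 1) + 1 := by ring
    have e2 : (1 + 2 * (m + 1) : ℕ) = 2 * (m + 1) + 1 := by ring
    rw [e1, e2, intCh_coe, intCh_coe, intCh_coe, intCh_coe]
    have p1 : (2 * (m + 1) + 1 + 1).choose (m + 1 + 1) =
        (2 * (m + 1) + 1).choose (m + 1) + (2 * (m + 1) + 1).choose (m + 1 + 1) :=
      Nat.choose_succ_succ _ _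
    have p2 : (2 * (m + 1) + 1 + 1).choose (m + 1) =
        (2 * (m + 1) + 1).choose m + (2 * (m + 1) + 1).choose (m + 1) :=
      Nat.choose_succ_succ _ _
    have p3 : (2 * (m + 1) + 1).choose (m + 1 + 1) = (2 * (m + 1) + 1).choose (m + 1) :=
      Nat.choose_symm_half (m + 1)
    rw [p1, p2, p3]
    push_cast; ring

lemma Bal_rec (j : ℤ) (k : ℕ) : Bal j (k + 1) = Bal j k + Bal (j - 1) (k + 2) := by
  rcases lt_trichotomy j 0 with h | h | h
  · rw [Bal_neg _ h, Bal_neg _ h, Bal_neg _ (by omega)]; ring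
  · subst h; rw [Bal_zero, Bal_zero, Bal_neg _ (by norm_num)]; ring
  · obtain ⟨m, rfl⟩ : ∃ m : ℕ, j = (m : ℤ) + 1 := ⟨(j - 1).toNat, by omega⟩
    have h1 : ((m : ℤ) + 1) = ((m + 1 : ℕ) : ℤ) := by push_cast; ring
    rw [h1]
    have h2 : (((m + 1 : ℕ) : ℤ) - 1) = ((m : ℕ) : ℤ) := by push_cast; ring
    rw [h2, Bal_coe, Bal_coe, Bal_coe, h2]
    have topeq : ((k + 2) + 2 * m : ℕ) = k + 2 * (m + 1) := by ring
    rw [topeq]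
    have hp1 : intCh ((k + 1) + 2 * (m + 1)) ((m + 1 : ℕ) : ℤ) =
        intCh (k + 2 * (m + 1)) ((m + 1 : ℕ) : ℤ) + intCh (k + 2 * (m + 1)) ((m : ℕ) : ℤ) := by
      rw [show ((k + 1) + 2 * (m + 1) : ℕ) = (k + 2 * (m + 1)) + 1 from by ring, intCh_pascal, h2]
    have hp2 : intCh ((k + 1) + 2 * (m + 1)) ((m : ℕ) : ℤ) =
        intCh (k + 2 * (m + 1)) ((m : ℕ) : ℤ) + intCh (k + 2 * (m + 1)) (((m : ℕ) : ℤ) - 1) := by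
      rw [show ((k + 1) + 2 * (m + 1) : ℕ) = (k + 2 * (m + 1)) + 1 from by ring, intCh_pascal]
    rw [hp1, hp2]
    ring

lemma Bal_catalan (j : ℕ) : Bal (j : ℤ) 0 = (catalan j : ℤ) := by
  rcases j with _ | m
  · simp [Bal_zero]
  · rw [Bal_coe]
    have e1 : (((m+1:ℕ) : ℤ) - 1) = ((m : ℕ) : ℤ) := by push_cast; ring
    rw [e1, intCh_coe, intCh_coe]
    have key : ((m : ℤ) + 2) * ((((0 + 2*(m+1)).choose (m+1) : ℕ) : ℤ) - ((0 + 2*(m+1)).choose m : ℕ)) =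
        ((m : ℤ) + 2) * (catalan (m+1) : ℤ) := by
      have hc : ((m+1) + 1) * catalan (m+1) = (m+1).centralBinom := succ_mul_catalan_eq_centralBinom (m+1)
      have hb : (2*(m+1)).choose (m+1) * (m+1) = (2*(m+1)).choose m * (2*(m+1) - m) :=
        Nat.choose_succ_right_eq (2*(m+1)) m
      have hb' : (2*(m+1)).choose (m+1) * (m+1) = (2*(m+1)).choose m * (m + 2) := by
        rw [hb]; congr 1; omega
      have hcb : (m+1).centralBinom = (2*(m+1)).choose (m+1) := rfl
      have e0 : (0 + 2*(m+1) : ℕ) = 2*(m+1) := by ring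
      rw [e0]
      have := hb'
      -- (m+2) * (C - D) = (m+2)*C - (m+2)*D = (m+2)*C - (m+1)*C = C = centralBinom = (m+2)*catalan
      have hD : ((2*(m+1)).choose m : ℤ) * ((m : ℤ) + 2) = ((2*(m+1)).choose (m+1) : ℤ) * ((m:ℤ)+1) := by
        exact_mod_cast congrArg (fun x : ℕ => (x : ℤ)) hb'.symm
      have hC : ((m : ℤ) + 2) * (catalan (m+1) : ℤ) = ((2*(m+1)).choose (m+1) : ℤ) := by
        have := congrArg (fun x : ℕ => (x : ℤ)) hc
        push_cast at this ⊢
        rw [hcb] at this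
        push_cast at this
        linarith
      push_cast
      push_cast at hD
      linarith [hD, hC]
    have h2 : ((m : ℤ) + 2) ≠ 0 := by positivity
    exact mul_left_cancel₀ h2 key

def cc : ℕ → ℕ → Polynomial ℤ
  | 0, k => if k = 0 then 1 else 0
  | i+1, k => X * cc i k + cc i (k+1) + (match k with | 0 => 0 | k'+1 => cc i k')

lemma cc_zero (k : ℕ) : cc 0 k = if k = 0 then 1 else 0 := rfl

lemma cc_succ_zero (i : ℕ) : cc (i+1) 0 = X * cc i 0 + cc i 1 := by
  show _ + _ = _; simp [cc]

lemma cc_succ_succ (i k : ℕ) : cc (i+1) (k+1) = X * cc i (k+1) + cc i (k+2) + cc i k := rfl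

lemma cc_eq_zero : ∀ i k, i < k → cc i k = 0 := by
  intro i
  induction i with
  | zero => intro k hk; simp [cc_zero]; omega
  | succ i ih =>
    intro k hk
    match k, hk with
    | k'+1, hk =>
      rw [cc_succ_succ, ih (k'+1) (by omega), ih (k'+2) (by omega), ih k' (by omega)]
      ring

lemma cc_diag : ∀ i, cc i i = 1 := by
  intro i
  induction i with
  | zero => simp [cc_zero]
  | succ i ih =>
    rw [cc_succ_succ, ih, cc_eq_zero i (i+1) (by omega), cc_eq_zero i (i+2) (by omega)]
    ring

/-- the explicit formula -/
def ccE (i k : ℕ) : Polynomial ℤ :=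
  ∑ j ∈ range (i+1),
    Polynomial.C (intCh i ((k : ℤ) + 2 * (j : ℕ)) * Bal (j : ℕ) k) * X ^ (i - (k + 2 * j))

lemma ccE_def (i k : ℕ) : ccE i k =
    ∑ j ∈ range (i+1),
      Polynomial.C (intCh i ((k : ℤ) + 2 * (j : ℕ)) * Bal (j : ℕ) k) * X ^ (i - (k + 2 * j)) := rfl

/-- the second piece coming from Pascal -/
def ccS (i k : ℕ) : Polynomial ℤ :=
  ∑ j ∈ range (i+1),
    Polynomial.C (intCh i ((k : ℤ) + 2 * (j : ℕ) - 1) * Bal (j : ℕ) k) * X ^ (i + 1 - (k + 2 * j))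

lemma ccE_succ (i k : ℕ) : ccE (i+1) k = X * ccE i k + ccS i k := by
  rw [ccE_def, Finset.sum_range_succ]
  have hlast : intCh (i+1) ((k : ℤ) + 2 * ((i+1 : ℕ) : ℤ)) = 0 := by
    apply intCh_eq_zero; push_cast; omega
  rw [hlast]
  simp only [Int.zero_mul, map_zero, MulZeroClass.zero_mul, add_zero]
  have split : ∀ j ∈ range (i+1),
      Polynomial.C (intCh (i+1) ((k : ℤ) + 2 * (j : ℕ)) * Bal (j : ℕ) k) * X ^ (i + 1 - (k + 2 * j)) =
      (X * (Polynomial.C (intCh i ((k : ℤ) + 2 * (j : ℕ)) * Bal (j : ℕ) k) * X ^ (i - (k + 2 * j))))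
      + Polynomial.C (intCh i ((k : ℤ) + 2 * (j : ℕ) - 1) * Bal (j : ℕ) k) * X ^ (i + 1 - (k + 2 * j)) := by
    intro j hj
    rw [intCh_pascal]
    rw [add_mul, map_add, add_mul]
    congr 1
    by_cases h : k + 2 * j ≤ i
    · rw [show i + 1 - (k + 2*j) = (i - (k + 2*j)) + 1 from by omega]
      rw [pow_succ]
      ring
    · have h0 : intCh i ((k : ℤ) + 2 * (j : ℕ)) = 0 := by
        apply intCh_eq_zero; push_cast; omega
      rw [h0]
      simp
  rw [Finset.sum_congr rfl split, Finset.sum_add_distrib, ← Finset.mul_sum]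
  rfl

lemma ccS_zero (i : ℕ) : ccS i 0 = ccE i 1 := by
  rw [ccS, Finset.sum_range_succ']
  have hz : Polynomial.C (intCh i (((0:ℕ)) + 2 * (((0:ℕ)) : ℤ) - 1) * Bal ((0:ℕ)) 0) * X ^ (i + 1 - (0 + 2 * 0)) = 0 := by
    rw [show (((0:ℕ)) : ℤ) + 2 * (((0:ℕ)) : ℤ) - 1 = -1 from by norm_num]
    rw [intCh_neg (by norm_num)]
    simp
  rw [hz, add_zero]
  rw [ccE_def, Finset.sum_range_succ]
  have hlast : intCh i (((1 : ℕ)) + 2 * ((i : ℕ) : ℤ)) = 0 := by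
    apply intCh_eq_zero; push_cast; omega
  rw [hlast]
  simp only [Int.zero_mul, map_zero, MulZeroClass.zero_mul, add_zero]
  apply Finset.sum_congr rfl
  intro j hj
  have e1 : (((0:ℕ)) : ℤ) + 2 * (((j+1 : ℕ)) : ℤ) - 1 = (((1:ℕ)) : ℤ) + 2 * ((j : ℕ) : ℤ) := by
    push_cast; ring
  have e2 : (((j+1 : ℕ)) : ℤ) = ((j : ℕ) : ℤ) + 1 := by push_cast; ring
  have e3 : i + 1 - (0 + 2 * (j+1)) = i - (1 + 2*j) := by omega
  rw [e1, e2, Bal_succ_zero, e3]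

lemma ccS_succ (i k : ℕ) : ccS i (k+1) = ccE i k + ccE i (k+2) := by
  have split : ∀ j ∈ range (i+1),
      Polynomial.C (intCh i (((k+1 : ℕ) : ℤ) + 2 * (j : ℕ) - 1) * Bal (j : ℕ) (k+1)) * X ^ (i + 1 - ((k+1) + 2 * j)) =
      Polynomial.C (intCh i ((k : ℤ) + 2 * (j : ℕ)) * Bal (j : ℕ) k) * X ^ (i - (k + 2 * j))
      + Polynomial.C (intCh i ((k : ℤ) + 2 * (j : ℕ)) * Bal ((j : ℕ) - 1) (k+2)) * X ^ (i - (k + 2 * j)) := by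
    intro j hj
    have e1 : (((k+1 : ℕ)) : ℤ) + 2 * ((j : ℕ) : ℤ) - 1 = ((k : ℕ) : ℤ) + 2 * ((j : ℕ) : ℤ) := by
      push_cast; ring
    have e2 : i + 1 - ((k+1) + 2 * j) = i - (k + 2 * j) := by omega
    rw [e1, e2, Bal_rec, mul_add, map_add, add_mul]
  rw [ccS, Finset.sum_congr rfl split, Finset.sum_add_distrib]
  congr 1
  rw [Finset.sum_range_succ']
  have hz : Polynomial.C (intCh i ((k : ℤ) + 2 * (((0:ℕ)) : ℤ)) * Bal ((((0:ℕ)) : ℤ) - 1) (k+2)) * X ^ (i - (k + 2 * 0)) = 0 := by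
    rw [Bal_neg _ (by norm_num)]
    simp
  rw [hz, add_zero]
  rw [ccE_def, Finset.sum_range_succ]
  have hlast : intCh i (((k+2 : ℕ)) + 2 * ((i : ℕ) : ℤ)) = 0 := by
    apply intCh_eq_zero; push_cast; omega
  rw [hlast]
  simp only [Int.zero_mul, map_zero, MulZeroClass.zero_mul, add_zero]
  apply Finset.sum_congr rfl
  intro j hj
  have e1 : ((k : ℕ) : ℤ) + 2 * (((j+1 : ℕ)) : ℤ) = (((k+2 : ℕ)) : ℤ) + 2 * ((j : ℕ) : ℤ) := by
    push_cast; ring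
  have e2 : (((j+1 : ℕ)) : ℤ) - 1 = ((j : ℕ) : ℤ) := by push_cast; ring
  have e3 : i - (k + 2 * (j+1)) = i - ((k+2) + 2*j) := by omega
  rw [e1, e2, e3]

lemma cc_explicit : ∀ i k, cc i k = ccE i k := by
  intro i
  induction i with
  | zero =>
    intro k
    rw [cc_zero, ccE_def]
    rw [show (0:ℕ)+1 = 1 from rfl, Finset.sum_range_one]
    rw [show (k : ℤ) + 2 * (((0:ℕ)) : ℤ) = ((k:ℕ) : ℤ) from by push_cast; ring, intCh_coe]
    simp only [Nat.cast_zero, Bal_zero]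
    rcases k with _ | k'
    · simp
    · simp [Nat.choose_zero_succ]
  | succ i ih =>
    intro k
    rcases k with _ | k'
    · rw [cc_succ_zero, ih, ih, ccE_succ, ccS_zero]
    · rw [cc_succ_succ, ih, ih, ih, ccE_succ, ccS_succ]
      ring
lemma cc_motzkin (m : ℕ) : cc m 0 =
    ∑ k ∈ range (m / 2 + 1), Polynomial.C ((m.choose (2 * k) * catalan k : ℕ) : ℤ) * X ^ (m - 2 * k) := by
  rw [cc_explicit, ccE_def]
  have h1 : (∑ j ∈ range (m+1),
        Polynomial.C (intCh m (((0:ℕ)) + 2 * ((j : ℕ) : ℤ)) * Bal ((j : ℕ)) 0) * X ^ (m - (0 + 2 * j)))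
      = ∑ j ∈ range (m/2+1),
        Polynomial.C (intCh m (((0:ℕ)) + 2 * ((j : ℕ) : ℤ)) * Bal ((j : ℕ)) 0) * X ^ (m - (0 + 2 * j)) := by
    symm
    apply Finset.sum_subset (Finset.range_subset_range.mpr (by omega))
    intro j hj hj2
    simp only [Finset.mem_range] at hj hj2
    have e1 : ((0:ℕ) : ℤ) + 2 * ((j : ℕ) : ℤ) = ((2*j : ℕ) : ℤ) := by push_cast; ring
    rw [e1, intCh_coe, Nat.choose_eq_zero_of_lt (by omega)]
    simp
  rw [h1]
  apply Finset.sum_congr rfl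
  intro j hj
  have e1 : ((0:ℕ) : ℤ) + 2 * ((j : ℕ) : ℤ) = ((2*j : ℕ) : ℤ) := by push_cast; ring
  rw [e1, intCh_coe, Bal_catalan]
  have e2 : m - (0 + 2*j) = m - 2*j := by omega
  rw [e2]
  congr 1

lemma side_sum (a b R' : ℕ) (ha : a + 2 ≤ R' + 1) :
    ∑ k ∈ range (R'+1), cc (a+1) k * cc b k =
      X * ∑ k ∈ range (R'+1), cc a k * cc b k
      + ∑ k ∈ range R', cc a (k+1) * cc b k
      + ∑ k ∈ range R', cc a k * cc b (k+1) := by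
  have e1 : ∀ k ∈ range (R'+1), cc (a+1) k * cc b k =
      X * (cc a k * cc b k) + cc a (k+1) * cc b k
        + (match k with | 0 => (0 : Polynomial ℤ) | k'+1 => cc a k') * cc b k := by
    intro k _
    rcases k with _ | k'
    · rw [cc_succ_zero]; ring
    · rw [cc_succ_succ]; ring
  rw [Finset.sum_congr rfl e1, Finset.sum_add_distrib, Finset.sum_add_distrib, ← Finset.mul_sum]
  congr 1
  · congr 1
    rw [Finset.sum_range_succ, cc_eq_zero a (R'+1) (by omega), MulZeroClass.zero_mul, add_zero]
  · rw [Finset.sum_range_succ']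
    have hz : (match (0:ℕ) with | 0 => (0 : Polynomial ℤ) | k'+1 => cc a k') * cc b 0 = 0 := by
      show (0 : Polynomial ℤ) * cc b 0 = 0
      ring
    rw [hz, add_zero]

lemma swap_sum (i j R : ℕ) (hi : i + 2 ≤ R) (hj : j + 2 ≤ R) :
    ∑ k ∈ range R, cc (i+1) k * cc j k = ∑ k ∈ range R, cc i k * cc (j+1) k := by
  obtain ⟨R', rfl⟩ : ∃ R', R = R' + 1 := ⟨R - 1, by omega⟩
  have comm1 : ∑ k ∈ range (R'+1), cc i k * cc (j+1) k
      = ∑ k ∈ range (R'+1), cc (j+1) k * cc i k :=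
    Finset.sum_congr rfl (fun k _ => mul_comm _ _)
  rw [side_sum i j R' hi, comm1, side_sum j i R' hj]
  have c1 : ∑ k ∈ range (R'+1), cc j k * cc i k = ∑ k ∈ range (R'+1), cc i k * cc j k :=
    Finset.sum_congr rfl (fun k _ => mul_comm _ _)
  have c2 : ∑ k ∈ range R', cc j (k+1) * cc i k = ∑ k ∈ range R', cc i k * cc j (k+1) :=
    Finset.sum_congr rfl (fun k _ => mul_comm _ _)
  have c3 : ∑ k ∈ range R', cc j k * cc i (k+1) = ∑ k ∈ range R', cc i (k+1) * cc j k :=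
    Finset.sum_congr rfl (fun k _ => mul_comm _ _)
  rw [c1, c2, c3]
  ring

lemma hankel (mt : ℕ) : ∀ i j, i + j = mt →
    ∑ k ∈ range (mt + 2), cc i k * cc j k = cc mt 0 := by
  intro i
  induction i generalizing mt with
  | zero =>
    intro j hj
    have e1 : ∀ k ∈ range (mt+2), cc 0 k * cc j k = if 0 = k then cc j k else 0 := by
      intro k _
      rw [cc_zero]
      rcases k with _ | k'
      · simp
      · simp
    rw [Finset.sum_congr rfl e1, Finset.sum_ite_eq (range (mt+2)) 0 (fun k => cc j k)]
    have : (0:ℕ) ∈ range (mt+2) := by simp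
    rw [if_pos this]
    have : j = mt := by omega
    subst this
    rfl
  | succ i ih =>
    intro j hj
    rw [swap_sum i j (mt+2) (by omega) (by omega)]
    exact ih mt (j+1) (by omega)

lemma hankel' (i j R : ℕ) (hi : i < R) :
    ∑ k ∈ range R, cc i k * cc j k = cc (i+j) 0 := by
  have trunc : ∀ S : ℕ, i + 1 ≤ S → ∑ k ∈ range S, cc i k * cc j k = ∑ k ∈ range (i+1), cc i k * cc j k := by
    intro S hS
    symm
    apply Finset.sum_subset (Finset.range_subset_range.mpr hS)
    intro k hk hk2
    simp only [Finset.mem_range] at hk hk2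
    rw [cc_eq_zero i k (by omega), MulZeroClass.zero_mul]
  rw [trunc R (by omega), ← trunc (i+j+2) (by omega)]
  exact hankel (i+j) i j rfl
def Tfun (a b : ℕ) : Polynomial ℤ :=
  (if a = b then X + 1 else 0) + (if a + 1 = b then 1 else 0) + (if b + 1 = a then 1 else 0)

def Tmat (m : ℕ) : Matrix (Fin m) (Fin m) (Polynomial ℤ) :=
  Matrix.of fun i j => Tfun i j

lemma Tfun_shift (a b : ℕ) : Tfun (a+1) (b+1) = Tfun a b := by
  unfold Tfun
  split_ifs <;> first | rfl | (exfalso; omega)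

def GG : ℕ → Polynomial ℤ
  | 0 => 0
  | 1 => 1
  | (m+2) => (X + 1) * GG (m+1) - GG m

lemma GG_step (m : ℕ) : GG (m+2) = (X + 1) * GG (m+1) - GG m := rfl

lemma Tmat_det : ∀ m, (Tmat m).det = GG (m+1) := by
  have step : ∀ m, (Tmat (m+2)).det = (X+1) * (Tmat (m+1)).det - (Tmat m).det := by
    intro m
    rw [show (Tmat (m+2)).det = ((Tmat (m+2) : Matrix (Fin (m+1+1)) (Fin (m+1+1)) (Polynomial ℤ))).det from rfl]
    rw [Matrix.det_succ_row_zero]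
    rw [Fin.sum_univ_succ, Fin.sum_univ_succ]
    have hA00 : Tmat (m+2) 0 0 = X + 1 := by
      show Tfun 0 0 = X + 1
      unfold Tfun
      norm_num
    have hA01 : Tmat (m+2) 0 (Fin.succ 0) = 1 := by
      show Tfun ((0 : Fin (m+2)) : ℕ) ((Fin.succ 0 : Fin (m+2)) : ℕ) = 1
      norm_num [Tfun]
    have hrest : ∀ j : Fin m, Tmat (m+2) 0 (Fin.succ (Fin.succ j)) = 0 := by
      intro j
      show Tfun ((0 : Fin (m+2)) : ℕ) ((Fin.succ (Fin.succ j) : Fin (m+2)) : ℕ) = 0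
      have : ((Fin.succ (Fin.succ j) : Fin (m+2)) : ℕ) = (j : ℕ) + 2 := by simp
      rw [this]
      unfold Tfun
      norm_num
    have hm0 : (Tmat (m+2)).submatrix Fin.succ (Fin.succAbove 0) = Tmat (m+1) := by
      apply Matrix.ext
      intro i j
      show Tfun ((Fin.succ i : Fin (m+2)) : ℕ) (((0 : Fin (m+2)).succAbove j : Fin (m+2)) : ℕ) = Tfun (i:ℕ) (j:ℕ)
      have hj : (((0 : Fin (m+2)).succAbove j) : ℕ) = (j:ℕ)+1 := by
        rw [Fin.zero_succAbove, Fin.val_succ]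
      rw [hj, Fin.val_succ, Tfun_shift]
    have hc0 : (((Fin.succ 0 : Fin (m+2)).succAbove 0) : ℕ) = 0 := by
      rw [Fin.succ_succAbove_zero]
      rfl
    have hcs : ∀ q : Fin m, (((Fin.succ 0 : Fin (m+2)).succAbove (Fin.succ q)) : ℕ) = (q:ℕ)+2 := by
      intro q
      rw [Fin.succ_succAbove_succ, Fin.zero_succAbove, Fin.val_succ, Fin.val_succ]
    have hTf20 : ∀ a : ℕ, Tfun (a+2) 0 = 0 := by
      intro a
      unfold Tfun
      split_ifs <;> first | rfl | simp_all | omega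
    have hm1 : ((Tmat (m+2)).submatrix Fin.succ (Fin.succAbove (Fin.succ 0))).det = (Tmat m).det := by
      rw [Matrix.det_succ_column_zero, Fin.sum_univ_succ]
      have h00 : ((Tmat (m+2)).submatrix Fin.succ (Fin.succAbove (Fin.succ 0))) 0 0 = 1 := by
        show Tfun ((Fin.succ 0 : Fin (m+2)) : ℕ) (((Fin.succ 0 : Fin (m+2)).succAbove 0) : ℕ) = 1
        rw [hc0, Fin.val_succ]
        unfold Tfun
        norm_num
      have hrest2 : ∀ i : Fin m, ((Tmat (m+2)).submatrix Fin.succ (Fin.succAbove (Fin.succ 0))) (Fin.succ i) 0 = 0 := by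
        intro i
        show Tfun ((Fin.succ (Fin.succ i) : Fin (m+2)) : ℕ) (((Fin.succ 0 : Fin (m+2)).succAbove 0) : ℕ) = 0
        rw [hc0, Fin.val_succ, Fin.val_succ]
        exact hTf20 _
      have hsum2 : ∑ i : Fin m, (-1)^((Fin.succ i : Fin (m+1)) : ℕ) *
          ((Tmat (m+2)).submatrix Fin.succ (Fin.succAbove (Fin.succ 0))) (Fin.succ i) 0 *
          (((Tmat (m+2)).submatrix Fin.succ (Fin.succAbove (Fin.succ 0))).submatrix (Fin.succAbove (Fin.succ i)) Fin.succ).det = 0 := by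
        apply Finset.sum_eq_zero
        intro i _
        rw [hrest2 i]
        ring
      rw [hsum2, h00]
      have hm2 : ((Tmat (m+2)).submatrix Fin.succ (Fin.succAbove (Fin.succ 0))).submatrix (Fin.succAbove (0 : Fin (m+1))) Fin.succ = Tmat m := by
        apply Matrix.ext
        intro p q
        show Tfun ((Fin.succ ((0 : Fin (m+1)).succAbove p) : Fin (m+2)) : ℕ)
            (((Fin.succ 0 : Fin (m+2)).succAbove (Fin.succ q)) : ℕ) = Tfun (p:ℕ) (q:ℕ)
        rw [hcs q, Fin.val_succ, Fin.zero_succAbove, Fin.val_succ]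
        rw [show (p:ℕ)+1+1 = (p:ℕ)+2 from rfl]
        rw [show ((p:ℕ)+2) = ((p:ℕ)+1)+1 from rfl, show ((q:ℕ)+2) = ((q:ℕ)+1)+1 from rfl]
        rw [Tfun_shift, Tfun_shift]
      rw [hm2]
      simp
    have hsum0 : ∑ j : Fin m, (-1)^((Fin.succ (Fin.succ j) : Fin (m+2)) : ℕ) * Tmat (m+2) 0 (Fin.succ (Fin.succ j)) *
        ((Tmat (m+2)).submatrix Fin.succ (Fin.succAbove (Fin.succ (Fin.succ j)))).det = 0 := by
      apply Finset.sum_eq_zero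
      intro j _
      rw [hrest j]
      ring
    rw [hsum0, hA00, hA01, hm0, hm1]
    simp [Fin.val_succ]
    ring
  have base0 : (Tmat 0).det = GG 1 := by
    simp [Tmat, Matrix.det_fin_zero]; rfl
  have base1 : (Tmat 1).det = GG 2 := by
    rw [show (Tmat 1).det = Tmat 1 0 0 from Matrix.det_fin_one _]
    show Tfun 0 0 = GG 2
    rw [GG_step]
    unfold Tfun GG
    norm_num
  have key : ∀ m, (Tmat m).det = GG (m+1) ∧ (Tmat (m+1)).det = GG (m+2) := by
    intro m
    induction m with
    | zero => exact ⟨base0, base1⟩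
    | succ m ih =>
      refine ⟨ih.2, ?_⟩
      rw [step m, ih.1, ih.2]
      exact (GG_step (m+1)).symm
  exact fun m => (key m).1

def Lmat (n : ℕ) : Matrix (Fin (n+1)) (Fin (n+1)) (Polynomial ℤ) :=
  Matrix.of fun i k => cc (i : ℕ) (k : ℕ)

lemma Lmat_det (n : ℕ) : (Lmat n).det = 1 := by
  have h : (Lmat n).BlockTriangular OrderDual.toDual := by
    intro i j hij
    exact cc_eq_zero _ _ hij
  rw [Matrix.det_of_lowerTriangular _ h]
  apply Finset.prod_eq_one
  intro i _
  exact cc_diag _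

lemma TL_entry (n : ℕ) (k j : Fin (n+1)) :
    (Tmat (n+1) * (Lmat n)ᵀ) k j = cc (j : ℕ) (k : ℕ) + cc ((j : ℕ)+1) (k : ℕ) := by
  rw [Matrix.mul_apply]
  have expand : ∀ l : Fin (n+1), Tmat (n+1) k l * (Lmat n)ᵀ l j =
      (if k = l then (X+1) * cc (j:ℕ) (l:ℕ) else 0)
      + ((if (k:ℕ)+1 = (l:ℕ) then cc (j:ℕ) (l:ℕ) else 0)
      + (if (l:ℕ)+1 = (k:ℕ) then cc (j:ℕ) (l:ℕ) else 0)) := by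
    intro l
    show Tfun (k:ℕ) (l:ℕ) * cc (j:ℕ) (l:ℕ) = _
    unfold Tfun
    have hkl : ((k:ℕ) = (l:ℕ)) = (k = l) := by simp [Fin.ext_iff]
    simp only [hkl]
    split_ifs <;> ring
  rw [Finset.sum_congr rfl (fun l _ => expand l), Finset.sum_add_distrib, Finset.sum_add_distrib]
  have hS1 : ∑ l : Fin (n+1), (if k = l then (X+1) * cc (j:ℕ) (l:ℕ) else 0)
      = (X+1) * cc (j:ℕ) (k:ℕ) := by
    rw [Finset.sum_ite_eq]
    simp
  have hS2 : ∑ l : Fin (n+1), (if (k:ℕ)+1 = (l:ℕ) then cc (j:ℕ) (l:ℕ) else 0)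
      = cc (j:ℕ) ((k:ℕ)+1) := by
    by_cases hk : (k:ℕ) < n
    · have he : ∀ l : Fin (n+1), ((k:ℕ)+1 = (l:ℕ)) = ((⟨(k:ℕ)+1, by omega⟩ : Fin (n+1)) = l) := by
        intro l
        simp [Fin.ext_iff]
      simp_rw [he]
      rw [Finset.sum_ite_eq]
      simp
    · have hjn := j.isLt
      have hkn := k.isLt
      have he : ∀ l : Fin (n+1), ((k:ℕ)+1 = (l:ℕ)) = False := by
        intro l
        have := l.isLt
        simp only [eq_iff_iff, iff_false]
        omega
      simp_rw [he]
      rw [cc_eq_zero (j:ℕ) ((k:ℕ)+1) (by omega)]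
      simp
  rw [hS1, hS2]
  cases hk0 : (k:ℕ) with
  | zero =>
    have h3 : ∀ l : Fin (n+1), (if (l:ℕ)+1 = 0 then cc (j:ℕ) (l:ℕ) else 0) = 0 := by
      intro l
      simp
    rw [Finset.sum_congr rfl (fun l _ => h3 l), Finset.sum_const_zero, cc_succ_zero]
    rw [show (0:ℕ)+1 = 1 from rfl]
    ring
  | succ k0 =>
    have hl0 : k0 < n+1 := by have := k.isLt; omega
    have h3 : ∀ l : Fin (n+1), ((l:ℕ)+1 = k0+1) = ((⟨k0, hl0⟩ : Fin (n+1)) = l) := by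
      intro l
      simp only [eq_iff_iff, Fin.ext_iff]
      constructor <;> omega
    simp_rw [h3]
    rw [Finset.sum_ite_eq]
    simp only [Finset.mem_univ, if_true]
    rw [cc_succ_succ]
    rw [show k0+1+1 = k0+2 by omega]
    ring

lemma LTL_entry (n : ℕ) (i j : Fin (n+1)) :
    (Lmat n * (Tmat (n+1) * (Lmat n)ᵀ)) i j = cc ((i:ℕ)+(j:ℕ)) 0 + cc ((i:ℕ)+(j:ℕ)+1) 0 := by
  rw [Matrix.mul_apply]
  have e : ∀ k : Fin (n+1), Lmat n i k * (Tmat (n+1) * (Lmat n)ᵀ) k j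
      = cc (i:ℕ) (k:ℕ) * cc (j:ℕ) (k:ℕ) + cc (i:ℕ) (k:ℕ) * cc ((j:ℕ)+1) (k:ℕ) := by
    intro k
    rw [TL_entry]
    show cc (i:ℕ) (k:ℕ) * _ = _
    ring
  rw [Finset.sum_congr rfl (fun k _ => e k), Finset.sum_add_distrib]
  rw [Fin.sum_univ_eq_sum_range (fun k => cc (i:ℕ) k * cc (j:ℕ) k) (n+1)]
  rw [Fin.sum_univ_eq_sum_range (fun k => cc (i:ℕ) k * cc ((j:ℕ)+1) k) (n+1)]
  rw [hankel' (i:ℕ) (j:ℕ) (n+1) i.isLt, hankel' (i:ℕ) ((j:ℕ)+1) (n+1) i.isLt]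
  rw [show (i:ℕ)+((j:ℕ)+1) = (i:ℕ)+(j:ℕ)+1 from by ring]

end MotzkinAux

theorem motzkin_poly_sum_hankel_det (n : ℕ)
    (M : ℕ → Polynomial ℤ)
    (hM : ∀ m, M m = ∑ k ∈ range (m / 2 + 1),
        Polynomial.C ((m.choose (2 * k) * catalan k : ℕ) : ℤ) * X ^ (m - 2 * k))
    (F : ℕ → Polynomial ℤ)
    (hF0 : F 0 = 0) (hF1 : F 1 = 1)
    (hF : ∀ m, F (m + 2) = X * F (m + 1) - F m) :
    (Matrix.of fun i j : Fin (n + 1) =>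
        M ((i : ℕ) + (j : ℕ)) + M ((i : ℕ) + (j : ℕ) + 1)).det
      = (F (n + 2)).comp (X + 1) := by
  have hMc : ∀ m, M m = cc m 0 := by
    intro m
    rw [hM m, cc_motzkin]
  have hmat : (Matrix.of fun i j : Fin (n + 1) =>
      M ((i : ℕ) + (j : ℕ)) + M ((i : ℕ) + (j : ℕ) + 1))
      = Lmat n * (Tmat (n+1) * (Lmat n)ᵀ) := by
    apply Matrix.ext
    intro i j
    rw [LTL_entry]
    show M _ + M _ = _
    rw [hMc, hMc]
  rw [hmat, Matrix.det_mul, Matrix.det_mul, Lmat_det, Matrix.det_transpose, Lmat_det, Tmat_det]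
  have key : ∀ m, (F m).comp (X+1) = GG m ∧ (F (m+1)).comp (X+1) = GG (m+1) := by
    intro m
    induction m with
    | zero =>
      constructor
      · rw [hF0]
        simp [GG]
      · rw [hF1]
        simp [GG]
    | succ m ih =>
      refine ⟨ih.2, ?_⟩
      rw [hF m, Polynomial.sub_comp, Polynomial.mul_comp, Polynomial.X_comp, ih.1, ih.2, GG_step]
  rw [(key (n+2)).1]
  ring
end
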